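/- arXiv:1501.00965 — 10 statements merged into one kernel-verified Lean document; each statement's English description precedes it below -/
import Mathlib

section
/- For every positive integer N and every continuous bilinear form U : ℝ^N × ℝ^N → ℝ (where ℝ^N carries the sup norm), one has Σ_{i=1}^{N} ( Σ_{j=1}^{N} |U(e_i,e_j)|² )^{1/2} ≤ √2 · ‖U‖. -/
namespace Littlewood

noncomputable def sg (b : Bool) : ℝ := if b then 1 else -1

lemma sg_mul_self (b : Bool) : sg b * sg b = 1 := by cases b <;> norm_num [sg]
lemma sg_mul_ne {b b' : Bool} (h : b ≠ b') : sg b * sg b' = -1 := by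
  cases b <;> cases b' <;> simp_all [sg]
lemma sg_not (b : Bool) : sg (!b) = - sg b := by cases b <;> simp [sg]
lemma abs_sg (b : Bool) : |sg b| = 1 := by cases b <;> simp [sg]

variable {N : ℕ}

noncomputable def chi (S : Finset (Fin N)) (ε : Fin N → Bool) : ℝ :=
  ∏ i ∈ S, sg (ε i)

lemma chi_eq (S : Finset (Fin N)) (ε : Fin N → Bool) :
    chi S ε = ∏ i : Fin N, (if i ∈ S then sg (ε i) else 1) := by
  rw [chi, Finset.prod_ite_mem, Finset.univ_inter]

lemma sum_chi_mul (S T : Finset (Fin N)) :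
    ∑ ε : Fin N → Bool, chi S ε * chi T ε = if S = T then (2:ℝ)^N else 0 := by
  have key : ∑ ε : Fin N → Bool, chi S ε * chi T ε
      = ∏ i : Fin N, ∑ b : Bool,
          (if i ∈ S then sg b else 1) * (if i ∈ T then sg b else 1) := by
    rw [Fintype.prod_sum (fun i b => (if i ∈ S then sg b else 1) * (if i ∈ T then sg b else 1))]
    refine Finset.sum_congr rfl fun ε _ => ?_
    rw [chi_eq, chi_eq, ← Finset.prod_mul_distrib]
  rw [key]
  by_cases h : S = T
  · subst h
    rw [if_pos rfl]
    have : ∀ i ∈ (Finset.univ : Finset (Fin N)),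
        (∑ b : Bool, (if i ∈ S then sg b else 1) * (if i ∈ S then sg b else 1)) = 2 := by
      intro i _
      by_cases hi : i ∈ S <;> simp [hi, Fintype.sum_bool, sg] <;> norm_num
    rw [Finset.prod_congr rfl this, Finset.prod_const, Finset.card_univ, Fintype.card_fin]
  · rw [if_neg h]
    obtain ⟨i, hi⟩ : ∃ i, ¬ (i ∈ S ↔ i ∈ T) := by
      by_contra hc
      push_neg at hc
      exact h (Finset.ext fun i => (hc i))
    refine Finset.prod_eq_zero (Finset.mem_univ i) ?_
    rcases not_iff.mp hi with h'
    by_cases hS : i ∈ S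
    · have hT : i ∉ T := by tauto
      simp [hS, hT, Fintype.sum_bool, sg]
    · have hT : i ∈ T := by tauto
      simp [hS, hT, Fintype.sum_bool, sg]

lemma sum_chi_chi (ε ε' : Fin N → Bool) :
    ∑ S : Finset (Fin N), chi S ε * chi S ε'
      = if ε = ε' then (2:ℝ)^N else 0 := by
  have key : ∑ S : Finset (Fin N), chi S ε * chi S ε'
      = ∏ i : Fin N, (sg (ε i) * sg (ε' i) + 1) := by
    rw [Fintype.prod_add (fun i => sg (ε i) * sg (ε' i)) (fun _ => (1:ℝ))]
    refine Finset.sum_congr rfl fun S _ => ?_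
    rw [Finset.prod_const_one, mul_one, chi, chi, ← Finset.prod_mul_distrib]
  rw [key]
  by_cases h : ε = ε'
  · subst h
    rw [if_pos rfl]
    rw [Finset.prod_congr rfl (fun i _ => by rw [sg_mul_self] : ∀ i ∈ Finset.univ, sg (ε i) * sg (ε i) + 1 = 1 + 1),
      Finset.prod_const, Finset.card_univ, Fintype.card_fin]
    norm_num
  · rw [if_neg h]
    obtain ⟨i, hi⟩ : ∃ i, ε i ≠ ε' i := Function.ne_iff.mp h
    refine Finset.prod_eq_zero (Finset.mem_univ i) ?_
    rw [sg_mul_ne hi]; ring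

/-- Plancherel. -/
lemma plancherel (f g : (Fin N → Bool) → ℝ) :
    ∑ S : Finset (Fin N), (∑ ε : Fin N → Bool, f ε * chi S ε) *
        (∑ ε : Fin N → Bool, g ε * chi S ε)
      = (2:ℝ)^N * ∑ ε : Fin N → Bool, f ε * g ε := by
  have h1 : ∀ S : Finset (Fin N),
      (∑ ε : Fin N → Bool, f ε * chi S ε) * (∑ ε : Fin N → Bool, g ε * chi S ε)
      = ∑ ε : Fin N → Bool, ∑ ε' : Fin N → Bool,
          f ε * g ε' * (chi S ε * chi S ε') := by
    intro S
    rw [Finset.sum_mul_sum]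
    exact Finset.sum_congr rfl fun ε _ => Finset.sum_congr rfl fun ε' _ => by ring
  rw [Finset.sum_congr rfl fun S _ => h1 S]
  rw [Finset.sum_comm]
  rw [Finset.sum_congr rfl fun ε _ => Finset.sum_comm]
  have h2 : ∀ ε : Fin N → Bool, ∀ ε' : Fin N → Bool,
      ∑ S : Finset (Fin N), f ε * g ε' * (chi S ε * chi S ε')
        = f ε * g ε' * (if ε = ε' then (2:ℝ)^N else 0) := by
    intro ε ε'
    rw [← Finset.mul_sum, sum_chi_chi]
  rw [Finset.sum_congr rfl fun ε _ => Finset.sum_congr rfl fun ε' _ => h2 ε ε']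
  rw [Finset.mul_sum]
  refine Finset.sum_congr rfl fun ε _ => ?_
  rw [show (∑ ε' : Fin N → Bool, f ε * g ε' * if ε = ε' then (2:ℝ)^N else 0)
      = ∑ ε' : Fin N → Bool, (if ε' = ε then f ε * g ε' * (2:ℝ)^N else 0) from
    Finset.sum_congr rfl fun ε' _ => by
      by_cases h : ε = ε'
      · subst h; simp
      · rw [if_neg h, if_neg (fun hh => h hh.symm), mul_zero]]
  rw [Finset.sum_ite_eq' Finset.univ ε (fun ε' => f ε * g ε' * (2:ℝ)^N)]
  simp [mul_comm]

noncomputable def fhat (f : (Fin N → Bool) → ℝ) (S : Finset (Fin N)) : ℝ :=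
  ∑ ε : Fin N → Bool, f ε * chi S ε

lemma parseval (f : (Fin N → Bool) → ℝ) :
    ∑ S : Finset (Fin N), (fhat f S)^2 = (2:ℝ)^N * ∑ ε : Fin N → Bool, (f ε)^2 := by
  have := plancherel f f
  simpa [fhat, sq] using this

def flip (i : Fin N) (ε : Fin N → Bool) : Fin N → Bool :=
  Function.update ε i (!(ε i))

lemma flip_invol (i : Fin N) : Function.Involutive (flip i) := by
  intro ε
  funext j
  by_cases h : j = i
  · subst h; simp [flip, Function.update]
  · simp [flip, Function.update, h]

lemma chi_flip (S : Finset (Fin N)) (i : Fin N) (ε : Fin N → Bool) :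
    chi S (flip i ε) = (if i ∈ S then -1 else 1) * chi S ε := by
  by_cases hi : i ∈ S
  · rw [if_pos hi, chi, chi, ← Finset.mul_prod_erase S _ hi, ← Finset.mul_prod_erase S _ hi]
    have h1 : sg (flip i ε i) = - sg (ε i) := by
      rw [show flip i ε i = !(ε i) by simp [flip], sg_not]
    have h2 : ∀ j ∈ S.erase i, sg (flip i ε j) = sg (ε j) := by
      intro j hj
      rw [show flip i ε j = ε j from Function.update_of_ne (Finset.ne_of_mem_erase hj) _ _]
    rw [h1, Finset.prod_congr rfl h2]; ring
  · rw [if_neg hi, one_mul, chi, chi]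
    refine Finset.prod_congr rfl fun j hj => ?_
    rw [show flip i ε j = ε j from
      Function.update_of_ne (fun h : j = i => hi (by rw [← h]; exact hj)) _ _]

lemma fhat_flip (f : (Fin N → Bool) → ℝ) (i : Fin N) (S : Finset (Fin N)) :
    ∑ ε : Fin N → Bool, f (flip i ε) * chi S ε
      = (if i ∈ S then -1 else 1) * fhat f S := by
  have := Fintype.sum_equiv ((flip_invol i).toPerm _)
    (fun ε => f (flip i ε) * chi S ε) (fun ε => f ε * chi S (flip i ε)) ?_
  · rw [this, fhat, Finset.mul_sum]
    exact Finset.sum_congr rfl fun ε _ => by rw [chi_flip]; ring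
  · intro ε
    simp only [Function.Involutive.coe_toPerm]
    rw [flip_invol i ε]

def negAll (ε : Fin N → Bool) : Fin N → Bool := fun j => !(ε j)

lemma negAll_invol : Function.Involutive (negAll (N := N)) := by
  intro ε; funext j; simp [negAll]

lemma chi_negAll (S : Finset (Fin N)) (ε : Fin N → Bool) :
    chi S (negAll ε) = (-1)^S.card * chi S ε := by
  rw [chi, chi, Finset.prod_congr rfl (fun j _ => by rw [show sg (negAll ε j) = -sg (ε j) from sg_not _] : ∀ j ∈ S, sg (negAll ε j) = - sg (ε j)),
    show (∏ j ∈ S, -sg (ε j)) = (-1)^S.card * ∏ i ∈ S, sg (ε i) from ?_]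
  rw [Finset.prod_congr rfl (fun j _ => (neg_one_mul (sg (ε j))).symm :
      ∀ j ∈ S, -sg (ε j) = -1 * sg (ε j)), Finset.prod_mul_distrib, Finset.prod_const]

lemma fhat_odd_eq_zero (f : (Fin N → Bool) → ℝ) (hf : ∀ ε, f (negAll ε) = f ε)
    (S : Finset (Fin N)) (hS : S.card = 1) : fhat f S = 0 := by
  have key : fhat f S = - fhat f S := by
    calc fhat f S = ∑ ε : Fin N → Bool, f (negAll ε) * chi S ε := by
          rw [fhat]; exact Finset.sum_congr rfl fun ε _ => by rw [hf]
    _ = ∑ ε : Fin N → Bool, f ε * chi S (negAll ε) := by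
          refine Fintype.sum_equiv (negAll_invol.toPerm _) _ _ fun ε => ?_
          simp only [Function.Involutive.coe_toPerm]
          rw [negAll_invol ε]
    _ = - fhat f S := by
          rw [fhat, ← Finset.sum_neg_distrib]
          refine Finset.sum_congr rfl fun ε _ => ?_
          rw [chi_negAll, hS]; ring
  linarith


lemma khinchine (a : Fin N → ℝ) :
    (2:ℝ)^N * Real.sqrt (∑ j, a j ^ 2)
      ≤ Real.sqrt 2 * ∑ ε : Fin N → Bool, |∑ j, a j * sg (ε j)| := by
  set f : (Fin N → Bool) → ℝ := fun ε => |∑ j, a j * sg (ε j)| with hfdef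
  -- second moment
  have hF2 : ∑ ε : Fin N → Bool, (f ε)^2 = (2:ℝ)^N * ∑ j, a j ^ 2 := by
    have h0 : ∀ ε : Fin N → Bool, (f ε)^2
        = ∑ j, ∑ k, (a j * a k) * (chi {j} ε * chi {k} ε) := by
      intro ε
      rw [hfdef]
      simp only [sq_abs]
      rw [sq, Finset.sum_mul_sum]
      refine Finset.sum_congr rfl fun j _ => Finset.sum_congr rfl fun k _ => ?_
      simp only [chi, Finset.prod_singleton]
      ring
    rw [Finset.sum_congr rfl fun ε _ => h0 ε, Finset.sum_comm,
      Finset.sum_congr rfl fun j _ => Finset.sum_comm]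
    have h1 : ∀ j k : Fin N, ∑ ε : Fin N → Bool, (a j * a k) * (chi {j} ε * chi {k} ε)
        = if k = j then (a j * a k) * (2:ℝ)^N else 0 := by
      intro j k
      rw [← Finset.mul_sum, sum_chi_mul]
      by_cases h : k = j
      · subst h; simp
      · rw [if_neg (fun hh : ({j}:Finset (Fin N)) = {k} =>
          h (Finset.singleton_inj.mp hh).symm), if_neg h, mul_zero]
    rw [Finset.sum_congr rfl fun j _ => Finset.sum_congr rfl fun k _ => h1 j k]
    rw [Finset.sum_congr rfl fun j (_ : j ∈ Finset.univ) =>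
      Finset.sum_ite_eq' Finset.univ j (fun k => (a j * a k) * (2:ℝ)^N)]
    simp only [Finset.mem_univ, if_pos]
    rw [Finset.mul_sum]
    exact Finset.sum_congr rfl fun j _ => by ring
  -- evenness
  have hEven : ∀ ε, f (negAll ε) = f ε := by
    intro ε
    rw [hfdef]
    simp only
    rw [show (∑ j, a j * sg (negAll ε j)) = - ∑ j, a j * sg (ε j) from ?_, abs_neg]
    rw [← Finset.sum_neg_distrib]
    exact Finset.sum_congr rfl fun j _ => by rw [show negAll ε j = !(ε j) from rfl, sg_not]; ring
  -- gradient bound per coordinate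
  have hDi : ∀ i : Fin N, ∑ S : Finset (Fin N), (if i ∈ S then (fhat f S)^2 else 0)
      ≤ (2:ℝ)^N * (2:ℝ)^N * (a i)^2 := by
    intro i
    set g : (Fin N → Bool) → ℝ := fun ε => f ε - f (flip i ε) with hgdef
    have hg_hat : ∀ S, fhat g S = (if i ∈ S then 2 * fhat f S else 0) := by
      intro S
      rw [fhat]
      have : ∀ ε : Fin N → Bool, g ε * chi S ε
          = f ε * chi S ε - f (flip i ε) * chi S ε := fun ε => by rw [hgdef]; ring
      rw [Finset.sum_congr rfl fun ε _ => this ε, Finset.sum_sub_distrib, fhat_flip]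
      by_cases h : i ∈ S
      · rw [if_pos h, if_pos h, ← fhat]; ring
      · rw [if_neg h, if_neg h, ← fhat]; ring
    have hg_bound : ∀ ε, (g ε)^2 ≤ 4 * (a i)^2 := by
      intro ε
      have hflipsum : ∑ j, a j * sg (flip i ε j)
          = (∑ j, a j * sg (ε j)) - 2 * (a i * sg (ε i)) := by
        have : ∑ j, (a j * sg (flip i ε j) - a j * sg (ε j))
            = - (2 * (a i * sg (ε i))) := by
          rw [Finset.sum_eq_single i]
          · rw [show flip i ε i = !(ε i) by simp [flip], sg_not]; ring
          · intro j _ hj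
            rw [show flip i ε j = ε j from Function.update_of_ne hj _ _]; ring
          · intro h; exact absurd (Finset.mem_univ i) h
        rw [Finset.sum_sub_distrib] at this
        linarith
      have habs : |g ε| ≤ 2 * |a i| := by
        have h1 := abs_abs_sub_abs_le_abs_sub (∑ j, a j * sg (ε j))
          (∑ j, a j * sg (flip i ε j))
        have h2 : |(∑ j, a j * sg (ε j)) - ∑ j, a j * sg (flip i ε j)| = 2 * |a i| := by
          rw [hflipsum, show (∑ j, a j * sg (ε j))
              - ((∑ j, a j * sg (ε j)) - 2*(a i * sg (ε i))) = (2 * a i) * sg (ε i) by ring,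
            abs_mul, abs_sg, mul_one, abs_mul, abs_two]
        calc |g ε| = |(|∑ j, a j * sg (ε j)|) - (|∑ j, a j * sg (flip i ε j)|)| := rfl
          _ ≤ |(∑ j, a j * sg (ε j)) - ∑ j, a j * sg (flip i ε j)| := h1
          _ = 2 * |a i| := h2
      calc (g ε)^2 = |g ε|^2 := (sq_abs _).symm
        _ ≤ (2 * |a i|)^2 := by
            apply pow_le_pow_left₀ (abs_nonneg _) habs
        _ = 4 * (a i)^2 := by rw [mul_pow, sq_abs]; norm_num
    have hcard : (Fintype.card (Fin N → Bool) : ℝ) = (2:ℝ)^N := by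
      rw [Fintype.card_fun, Fintype.card_bool, Fintype.card_fin]
      push_cast; rfl
    have hsum_g : ∑ S : Finset (Fin N), (fhat g S)^2 ≤ (2:ℝ)^N * ((2:ℝ)^N * (4 * (a i)^2)) := by
      rw [parseval]
      have : ∑ ε : Fin N → Bool, (g ε)^2 ≤ (2:ℝ)^N * (4 * (a i)^2) := by
        calc ∑ ε : Fin N → Bool, (g ε)^2 ≤ ∑ _ε : Fin N → Bool, 4 * (a i)^2 :=
              Finset.sum_le_sum fun ε _ => hg_bound ε
          _ = (2:ℝ)^N * (4 * (a i)^2) := by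
              rw [Finset.sum_const, Finset.card_univ, nsmul_eq_mul, hcard]
      have h2N : (0:ℝ) ≤ (2:ℝ)^N := by positivity
      exact mul_le_mul_of_nonneg_left this h2N
    have hsum_g' : ∑ S : Finset (Fin N), (fhat g S)^2
        = 4 * ∑ S : Finset (Fin N), (if i ∈ S then (fhat f S)^2 else 0) := by
      rw [Finset.mul_sum]
      refine Finset.sum_congr rfl fun S _ => ?_
      rw [hg_hat]
      by_cases h : i ∈ S <;> simp [h] <;> ring
    rw [hsum_g'] at hsum_g
    nlinarith [hsum_g]
  -- sum over i
  have hLap : ∑ S : Finset (Fin N), (S.card : ℝ) * (fhat f S)^2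
      ≤ (2:ℝ)^N * (2:ℝ)^N * ∑ j, (a j)^2 := by
    have hswap : ∑ S : Finset (Fin N), (S.card : ℝ) * (fhat f S)^2
        = ∑ i : Fin N, ∑ S : Finset (Fin N), (if i ∈ S then (fhat f S)^2 else 0) := by
      rw [Finset.sum_comm]
      refine Finset.sum_congr rfl fun S _ => ?_
      rw [Finset.sum_ite_mem, Finset.univ_inter, Finset.sum_const, nsmul_eq_mul]
    rw [hswap, Finset.mul_sum]
    exact Finset.sum_le_sum fun i _ => hDi i
  -- parseval total
  have hPar : ∑ S : Finset (Fin N), (fhat f S)^2 = (2:ℝ)^N * ((2:ℝ)^N * ∑ j, (a j)^2) := by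
    rw [parseval, hF2]
  -- fhat at ∅
  have hEmpty : fhat f ∅ = ∑ ε : Fin N → Bool, f ε := by
    rw [fhat]
    exact Finset.sum_congr rfl fun ε _ => by rw [chi, Finset.prod_empty, mul_one]
  -- termwise spectral comparison
  have hterm : ∀ S : Finset (Fin N),
      2 * (if S = ∅ then 0 else (fhat f S)^2) ≤ (S.card : ℝ) * (fhat f S)^2 := by
    intro S
    by_cases h : S = ∅
    · subst h; simp
    · rw [if_neg h]
      rcases Nat.lt_or_ge S.card 2 with hc | hc
      · interval_cases hcard : S.card
        · exact absurd (Finset.card_eq_zero.mp hcard) h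
        · rw [fhat_odd_eq_zero f hEven S hcard]
          simp
      · have : (2:ℝ) ≤ (S.card : ℝ) := by exact_mod_cast hc
        nlinarith [sq_nonneg (fhat f S)]
  have hsplit : ∀ S : Finset (Fin N), (fhat f S)^2
      = (if S = ∅ then (fhat f S)^2 else 0) + (if S = ∅ then 0 else (fhat f S)^2) := by
    intro S; by_cases h : S = ∅ <;> simp [h]
  have hne : ∑ S : Finset (Fin N), (if S = ∅ then 0 else (fhat f S)^2)
      = (∑ S : Finset (Fin N), (fhat f S)^2) - (fhat f ∅)^2 := by
    have h1 : ∑ S : Finset (Fin N), (if S = ∅ then (fhat f S)^2 else 0) = (fhat f ∅)^2 :=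
      Finset.sum_ite_eq' Finset.univ (∅ : Finset (Fin N)) (fun S => (fhat f S)^2)
        |>.trans (by simp)
    rw [Finset.sum_congr rfl fun S _ => hsplit S, Finset.sum_add_distrib, h1] at *
    ring
  -- key inequality
  set T := ∑ ε : Fin N → Bool, f ε with hT
  have hTnn : 0 ≤ T := Finset.sum_nonneg fun ε _ => by rw [hfdef]; positivity
  have hkey : (2:ℝ)^N * (2:ℝ)^N * ∑ j, (a j)^2 ≤ 2 * T^2 := by
    have c1 : 2 * ((∑ S : Finset (Fin N), (fhat f S)^2) - (fhat f ∅)^2)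
        ≤ (2:ℝ)^N * (2:ℝ)^N * ∑ j, (a j)^2 := by
      rw [← hne, Finset.mul_sum]
      exact le_trans (Finset.sum_le_sum fun S _ => hterm S) hLap
    rw [hPar, hEmpty] at c1
    nlinarith
  -- take square roots
  have hs : (0:ℝ) ≤ ∑ j, (a j)^2 := Finset.sum_nonneg fun j _ => sq_nonneg _
  calc (2:ℝ)^N * Real.sqrt (∑ j, a j ^ 2)
      = Real.sqrt (((2:ℝ)^N)^2 * ∑ j, (a j)^2) := by
        rw [Real.sqrt_mul (sq_nonneg _), Real.sqrt_sq (by positivity)]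
    _ ≤ Real.sqrt (2 * T^2) := Real.sqrt_le_sqrt (by nlinarith)
    _ = Real.sqrt 2 * T := by
        rw [Real.sqrt_mul (by norm_num), Real.sqrt_sq hTnn]

end Littlewood

open Littlewood in
/-- **Bilinear mixed (ℓ₁,ℓ₂)-Littlewood inequality.** For every positive integer `N` and
every continuous bilinear form `U` on `ℝ^N × ℝ^N` (sup norm),
`∑_{i} (∑_{j} |U(e_i,e_j)|²)^{1/2} ≤ √2 ‖U‖`. -/
theorem bilinear_mixed_littlewood (N : ℕ) (hN : 0 < N)
    (U : (Fin N → ℝ) →L[ℝ] (Fin N → ℝ) →L[ℝ] ℝ) :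
    ∑ i : Fin N, Real.sqrt (∑ j : Fin N, |U (Pi.single i 1) (Pi.single j 1)| ^ 2)
      ≤ Real.sqrt 2 * ‖U‖ := by
  set a : Fin N → Fin N → ℝ := fun i j => U (Pi.single i 1) (Pi.single j 1) with ha
  have hstep1 : (2:ℝ)^N * ∑ i : Fin N, Real.sqrt (∑ j : Fin N, (a i j) ^ 2)
      ≤ Real.sqrt 2 * ∑ ε : Fin N → Bool, ∑ i : Fin N, |∑ j, a i j * sg (ε j)| := by
    rw [Finset.mul_sum, Finset.sum_comm, Finset.mul_sum]
    exact Finset.sum_le_sum fun i _ => khinchine (a i)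
  have hstep2 : ∀ ε : Fin N → Bool, ∑ i : Fin N, |∑ j, a i j * sg (ε j)| ≤ ‖U‖ := by
    intro ε
    set w : Fin N → ℝ := fun j => sg (ε j) with hw
    have hw_eq : ∑ j : Fin N, w j • (Pi.single j 1 : Fin N → ℝ) = w := by
      have h1 : ∀ j ∈ (Finset.univ : Finset (Fin N)),
          w j • (Pi.single j 1 : Fin N → ℝ) = Pi.single j (w j) := by
        intro j _
        rw [← Pi.single_smul, smul_eq_mul, mul_one]
      rw [Finset.sum_congr rfl h1, Finset.univ_sum_single]
    have hUw : ∀ x : Fin N → ℝ, U x w = ∑ j, w j * U x (Pi.single j 1) := by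
      intro x
      conv_lhs => rw [← hw_eq]
      rw [map_sum]
      exact Finset.sum_congr rfl fun j _ => by rw [map_smul, smul_eq_mul]
    have hai : ∀ i, (∑ j, a i j * sg (ε j)) = U (Pi.single i 1) w := by
      intro i
      rw [hUw]
      exact Finset.sum_congr rfl fun j _ => by rw [ha, hw]; ring
    set x : Fin N → ℝ := fun i => if 0 ≤ U (Pi.single i 1) w then 1 else -1 with hx
    have habs : ∀ i, |U (Pi.single i 1) w| = x i * U (Pi.single i 1) w := by
      intro i
      rw [hx]
      by_cases h : 0 ≤ U (Pi.single i 1) w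
      · simp only [if_pos h, one_mul, abs_of_nonneg h]
      · simp only [if_neg h, neg_one_mul, abs_of_neg (lt_of_not_ge h)]
    have hx_eq : ∑ i : Fin N, x i • (Pi.single i 1 : Fin N → ℝ) = x := by
      have h1 : ∀ i ∈ (Finset.univ : Finset (Fin N)),
          x i • (Pi.single i 1 : Fin N → ℝ) = Pi.single i (x i) := by
        intro i _
        rw [← Pi.single_smul, smul_eq_mul, mul_one]
      rw [Finset.sum_congr rfl h1, Finset.univ_sum_single]
    have hUx : U x w = ∑ i, x i * U (Pi.single i 1) w := by
      conv_lhs => rw [← hx_eq]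
      rw [map_sum, ContinuousLinearMap.coe_sum', Finset.sum_apply]
      exact Finset.sum_congr rfl fun i _ => by
        rw [map_smul, ContinuousLinearMap.coe_smul', Pi.smul_apply, smul_eq_mul]
    have hxnorm : ‖x‖ ≤ 1 := by
      rw [pi_norm_le_iff_of_nonneg zero_le_one]
      intro i
      rw [hx, Real.norm_eq_abs]
      by_cases h : 0 ≤ U (Pi.single i 1) w <;> simp [h]
    have hwnorm : ‖w‖ ≤ 1 := by
      rw [pi_norm_le_iff_of_nonneg zero_le_one]
      intro j
      rw [hw, Real.norm_eq_abs, abs_sg]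
    calc ∑ i : Fin N, |∑ j, a i j * sg (ε j)| = ∑ i, x i * U (Pi.single i 1) w := by
          refine Finset.sum_congr rfl fun i _ => ?_
          rw [hai, habs]
      _ = U x w := hUx.symm
      _ ≤ |U x w| := le_abs_self _
      _ ≤ ‖U‖ * ‖x‖ * ‖w‖ := U.le_opNorm₂ x w
      _ ≤ ‖U‖ * 1 * 1 := by
          have h0 : (0:ℝ) ≤ ‖U‖ := ContinuousLinearMap.opNorm_nonneg U
          have h1 : (0:ℝ) ≤ ‖x‖ := norm_nonneg _
          have h2 : ‖U‖ * ‖x‖ * ‖w‖ ≤ ‖U‖ * ‖x‖ * 1 :=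
            mul_le_mul_of_nonneg_left hwnorm (mul_nonneg h0 h1)
          have h3 : ‖U‖ * ‖x‖ ≤ ‖U‖ * 1 := mul_le_mul_of_nonneg_left hxnorm h0
          nlinarith [h2, h3]
      _ = ‖U‖ := by ring
  have hcard : (Fintype.card (Fin N → Bool) : ℝ) = (2:ℝ)^N := by
    rw [Fintype.card_fun, Fintype.card_bool, Fintype.card_fin]
    push_cast; rfl
  have hstep3 : ∑ ε : Fin N → Bool, ∑ i : Fin N, |∑ j, a i j * sg (ε j)|
      ≤ (2:ℝ)^N * ‖U‖ := by
    calc ∑ ε : Fin N → Bool, ∑ i : Fin N, |∑ j, a i j * sg (ε j)|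
        ≤ ∑ _ε : Fin N → Bool, ‖U‖ := Finset.sum_le_sum fun ε _ => hstep2 ε
      _ = (2:ℝ)^N * ‖U‖ := by
          rw [Finset.sum_const, Finset.card_univ, nsmul_eq_mul, hcard]
  have habs_sq : ∀ i j : Fin N, |a i j|^2 = (a i j)^2 := fun i j => sq_abs _
  have hgoal : (2:ℝ)^N * ∑ i : Fin N, Real.sqrt (∑ j : Fin N, (a i j) ^ 2)
      ≤ (2:ℝ)^N * (Real.sqrt 2 * ‖U‖) := by
    have hs2 : (0:ℝ) ≤ Real.sqrt 2 := Real.sqrt_nonneg 2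
    calc (2:ℝ)^N * ∑ i : Fin N, Real.sqrt (∑ j : Fin N, (a i j) ^ 2)
        ≤ Real.sqrt 2 * ∑ ε : Fin N → Bool, ∑ i : Fin N, |∑ j, a i j * sg (ε j)| := hstep1
      _ ≤ Real.sqrt 2 * ((2:ℝ)^N * ‖U‖) := mul_le_mul_of_nonneg_left hstep3 hs2
      _ = (2:ℝ)^N * (Real.sqrt 2 * ‖U‖) := by ring
  have h2N : (0:ℝ) < (2:ℝ)^N := by positivity
  have := le_of_mul_le_mul_left (by exact hgoal) h2N
  calc ∑ i : Fin N, Real.sqrt (∑ j : Fin N, |U (Pi.single i 1) (Pi.single j 1)| ^ 2)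
      = ∑ i : Fin N, Real.sqrt (∑ j : Fin N, (a i j) ^ 2) := by
        refine Finset.sum_congr rfl fun i _ => ?_
        congr 1
        exact Finset.sum_congr rfl fun j _ => habs_sq i j
    _ ≤ Real.sqrt 2 * ‖U‖ := this
end

section
/- Let m ≥ 2 be an integer and let C ≥ 0 be a real constant such that for every positive integer N and every continuous m-linear form U : (ℝ^N)^m → ℝ (ℝ^N with the sup norm) one has Σ_{j₁=1}^{N} ( Σ_{j₂,...,j_m=1}^{N} |U(e_{j₁},...,e_{j_m})|² )^{1/2} ≤ C · ‖U‖. Then C ≥ (√2)^{m-1}. -/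
/-!
Take `N = 2 ^ n` and build the extremal form recursively by the butterfly step
`g ↦ (h ↦ (g (2h) + g (2h+1)) y (2h) + (g (2h) - g (2h+1)) y (2h+1))`, which halves the
support of `g` while absorbing one more variable `y`. Since `|a + b| + |a - b| = 2 max |a| |b|`,
every step at most doubles the sup norm, so the form has norm at most `2 ^ n`. Fixing the first
variable at a basis vector `e_j` turns the form into a product of `n` linear functionals, each
with exactly two coefficients `±1`; hence every inner `ℓ₂` sum equals `√2 ^ n`, the outer `ℓ₁`
sum equals `2 ^ n * √2 ^ n`, and the Littlewood inequality forces `√2 ^ n ≤ C`.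
-/

open Finset

theorem Real.sqrt_pow_of_nonneg {x : ℝ} (hx : 0 ≤ x) (n : ℕ) :
    Real.sqrt (x ^ n) = Real.sqrt x ^ n := by
  rw [Real.sqrt_eq_iff_eq_sq (by positivity) (by positivity), ← pow_mul, mul_comm, pow_mul,
    Real.sq_sqrt hx]

theorem Function.ExtendByZero.linearMap_single {ι η : Type*} [DecidableEq ι] [DecidableEq η]
    {s : ι → η} (hs : s.Injective) (i : ι) (c : ℝ) :
    Function.ExtendByZero.linearMap ℝ s (Pi.single i c) = Pi.single (s i) c := by
  ext b
  by_cases hb : ∃ a, s a = b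
  · obtain ⟨a, rfl⟩ := hb
    simp [hs.extend_apply, Pi.single_apply, hs.eq_iff]
  · rw [Function.ExtendByZero.linearMap_apply, Function.extend_apply' _ _ _ hb,
      Pi.single_eq_of_ne (fun h => hb ⟨i, h.symm⟩), Pi.zero_apply]

theorem Function.ExtendByZero.abs_linearMap_apply_le {ι η : Type*} [Fintype ι] {s : ι → η}
    (hs : s.Injective) (x : ι → ℝ) (b : η) : |Function.ExtendByZero.linearMap ℝ s x b| ≤ ‖x‖ := by
  by_cases hb : ∃ a, s a = b
  · obtain ⟨a, rfl⟩ := hb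
    simpa [hs.extend_apply] using norm_le_pi_norm x a
  · simp [Function.extend_apply' _ _ _ hb]

namespace MixedLittlewood

noncomputable def butterfly : (ℕ → ℝ) →ₗ[ℝ] (ℕ → ℝ) →ₗ[ℝ] (ℕ → ℝ) :=
  LinearMap.mk₂ ℝ
    (fun g y h =>
      (g (2 * h) + g (2 * h + 1)) * y (2 * h) + (g (2 * h) - g (2 * h + 1)) * y (2 * h + 1))
    (fun _ _ _ => by ext; simp only [Pi.add_apply]; ring)
    (fun _ _ _ => by ext; simp only [Pi.smul_apply, smul_eq_mul]; ring)
    (fun _ _ _ => by ext; simp only [Pi.add_apply]; ring)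
    (fun _ _ _ => by ext; simp only [Pi.smul_apply, smul_eq_mul]; ring)

theorem butterfly_apply (g y : ℕ → ℝ) (h : ℕ) :
    butterfly g y h
      = (g (2 * h) + g (2 * h + 1)) * y (2 * h) + (g (2 * h) - g (2 * h + 1)) * y (2 * h + 1) :=
  rfl

theorem abs_butterfly_le {g y : ℕ → ℝ} {a b : ℝ} (hg : ∀ r, |g r| ≤ a) (hy : ∀ r, |y r| ≤ b)
    (h : ℕ) : |butterfly g y h| ≤ 2 * a * b := by
  have hA := abs_le.mp (hg (2 * h))
  have hB := abs_le.mp (hg (2 * h + 1))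
  have hsum : |g (2 * h) + g (2 * h + 1)| + |g (2 * h) - g (2 * h + 1)| ≤ 2 * a := by
    rcases abs_cases (g (2 * h) + g (2 * h + 1)) with ⟨e₁, -⟩ | ⟨e₁, -⟩ <;>
      rcases abs_cases (g (2 * h) - g (2 * h + 1)) with ⟨e₂, -⟩ | ⟨e₂, -⟩ <;>
      linarith
  have hb : 0 ≤ b := (abs_nonneg _).trans (hy 0)
  calc |butterfly g y h|
      ≤ |g (2 * h) + g (2 * h + 1)| * b + |g (2 * h) - g (2 * h + 1)| * b := by
        rw [butterfly_apply]
        refine (abs_add_le _ _).trans (add_le_add ?_ ?_) <;> rw [abs_mul] <;>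
          exact mul_le_mul_of_nonneg_left (hy _) (abs_nonneg _)
    _ ≤ 2 * a * b := by nlinarith

def pairCoeff (j : ℕ) (y : ℕ → ℝ) : ℝ :=
  y (2 * (j / 2)) + (-1) ^ (j % 2) * y (2 * (j / 2) + 1)

theorem butterfly_single (j : ℕ) (y : ℕ → ℝ) :
    butterfly (Pi.single j 1) y = pairCoeff j y • Pi.single (j / 2) 1 := by
  ext h
  rw [butterfly_apply, pairCoeff]
  rcases Nat.even_or_odd' j with ⟨k, rfl | rfl⟩ <;> by_cases hk : h = k
  · subst hk; simp
  · simp [hk, show 2 * h ≠ 2 * k by omega, show 2 * h + 1 ≠ 2 * k by omega]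
  · subst hk; simp [show (2 * h + 1) / 2 = h by omega, show (2 * h + 1) % 2 = 1 by omega]
  · simp [hk, show 2 * h ≠ 2 * k + 1 by omega, show (2 * k + 1) / 2 = k by omega]

noncomputable def butterflyForm :
    (n : ℕ) → (ℕ → ℝ) →ₗ[ℝ] MultilinearMap ℝ (fun _ : Fin n => ℕ → ℝ) ℝ
  | 0 => (MultilinearMap.constLinearEquivOfIsEmpty ℝ ℝ _ ℝ).toLinearMap ∘ₗ LinearMap.proj 0
  | n + 1 =>
    (multilinearCurryLeftEquiv ℝ _ ℝ).symm.toLinearMap ∘ₗ butterfly.compr₂ (butterflyForm n)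

theorem butterflyForm_zero (g : ℕ → ℝ) (y : Fin 0 → ℕ → ℝ) : butterflyForm 0 g y = g 0 :=
  rfl

theorem butterflyForm_succ (n : ℕ) (g : ℕ → ℝ) (y : Fin (n + 1) → ℕ → ℝ) :
    butterflyForm (n + 1) g y = butterflyForm n (butterfly g (y 0)) (Fin.tail y) :=
  rfl

theorem abs_butterflyForm_le (n : ℕ) {g : ℕ → ℝ} {y : Fin n → ℕ → ℝ} {a : ℝ} {b : Fin n → ℝ}
    (hg : ∀ r, |g r| ≤ a) (hy : ∀ i r, |y i r| ≤ b i) :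
    |butterflyForm n g y| ≤ 2 ^ n * a * ∏ i, b i := by
  induction n generalizing g a with
  | zero => simpa [butterflyForm_zero] using hg 0
  | succ n ih =>
    rw [butterflyForm_succ, Fin.prod_univ_succ, pow_succ]
    calc _ ≤ 2 ^ n * (2 * a * b 0) * ∏ i : Fin n, b i.succ :=
          ih (abs_butterfly_le hg (hy 0)) (fun i r => hy i.succ r)
      _ = _ := by ring

theorem butterflyForm_single (n : ℕ) {j : ℕ} (hj : j < 2 ^ n) (y : Fin n → ℕ → ℝ) :
    butterflyForm n (Pi.single j 1) y = ∏ i : Fin n, pairCoeff (j / 2 ^ (i : ℕ)) (y i) := by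
  induction n generalizing j with
  | zero => simp [butterflyForm_zero, Nat.lt_one_iff.mp hj]
  | succ n ih =>
    rw [butterflyForm_succ, butterfly_single, map_smul, smul_apply,
      ih (by omega), Fin.prod_univ_succ]
    simp [Fin.tail, Nat.div_div_eq_div_mul, pow_succ']

theorem sum_sq_pairCoeff_single {N k : ℕ} (hk : 2 * (k / 2) + 1 < N) :
    ∑ r : Fin N, pairCoeff k (Pi.single (r : ℕ) 1) ^ 2 = 2 := by
  rw [Fin.sum_univ_eq_sum_range (fun r => pairCoeff k (Pi.single r 1) ^ 2),
    sum_eq_add (2 * (k / 2)) (2 * (k / 2) + 1) (by omega)]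
  · norm_num [pairCoeff, ← pow_mul]
  · intro r _ hr
    simp [pairCoeff, hr.1.symm, hr.2.symm]
  all_goals intro h; exact absurd (mem_range.mpr (by omega)) h

theorem two_mul_div_div_two_add_one_lt {j n i : ℕ} (hj : j < 2 ^ n) (hi : i < n) :
    2 * (j / 2 ^ i / 2) + 1 < 2 ^ n := by
  have hq : j / 2 ^ i / 2 < 2 ^ (n - (i + 1)) := by
    rw [Nat.div_div_eq_div_mul, ← pow_succ, Nat.div_lt_iff_lt_mul (by positivity), ← pow_add,
      Nat.sub_add_cancel hi]
    exact hj
  have hpow : 2 * 2 ^ (n - (i + 1)) ≤ 2 ^ n := by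
    rw [← pow_succ']
    exact Nat.pow_le_pow_right two_pos (by omega)
  omega

noncomputable def extremalForm (n : ℕ) :
    ContinuousMultilinearMap ℝ (fun _ : Fin (n + 1) => Fin (2 ^ n) → ℝ) ℝ :=
  ((butterflyForm n).uncurryLeft.compLinearMap
      fun _ => Function.ExtendByZero.linearMap ℝ Fin.val).mkContinuous (2 ^ n) fun x => by
    rw [Real.norm_eq_abs, Fin.prod_univ_succ, ← mul_assoc]
    exact abs_butterflyForm_le n
      (Function.ExtendByZero.abs_linearMap_apply_le Fin.val_injective (x 0))
      (fun i => Function.ExtendByZero.abs_linearMap_apply_le Fin.val_injective (x i.succ))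

theorem norm_extremalForm_le (n : ℕ) : ‖extremalForm n‖ ≤ 2 ^ n :=
  MultilinearMap.mkContinuous_norm_le _ (by positivity) _

theorem extremalForm_single (n : ℕ) (j₁ : Fin (2 ^ n)) (j : Fin n → Fin (2 ^ n)) :
    extremalForm n (Fin.cons (Pi.single j₁ 1) fun i => Pi.single (j i) 1)
      = ∏ i : Fin n, pairCoeff (j₁ / 2 ^ (i : ℕ)) (Pi.single (j i : ℕ) 1) := by
  simp [extremalForm, Fin.tail, Function.ExtendByZero.linearMap_single Fin.val_injective,
    butterflyForm_single n j₁.isLt]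

theorem sum_sq_extremalForm_single (n : ℕ) (j₁ : Fin (2 ^ n)) :
    ∑ j : Fin n → Fin (2 ^ n),
      |extremalForm n (Fin.cons (Pi.single j₁ 1) fun i => Pi.single (j i) 1)| ^ 2 = 2 ^ n := by
  simp_rw [extremalForm_single, sq_abs, ← prod_pow]
  rw [← Fintype.prod_sum fun (i : Fin n) (r : Fin (2 ^ n)) =>
    pairCoeff (j₁ / 2 ^ (i : ℕ)) (Pi.single (r : ℕ) 1) ^ 2]
  simp [sum_sq_pairCoeff_single (two_mul_div_div_two_add_one_lt j₁.isLt (Fin.isLt _))]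

end MixedLittlewood

/-- **Optimality of the constants of the mixed (ℓ₁,ℓ₂)-Littlewood inequality.**
If `C ≥ 0` is such that for every positive integer `N` and every continuous `m`-linear
form `U` on `(ℝ^N)^m` (sup norm, `m ≥ 2` written as `m + 2`) the mixed
`(ℓ₁,ℓ₂)`-Littlewood inequality holds with constant `C`, then `C ≥ (√2)^{m-1}`. -/
theorem mixed_littlewood_lower_bound (m : ℕ) (C : ℝ) (hC : 0 ≤ C)
    (h : ∀ N : ℕ, 0 < N →
      ∀ U : ContinuousMultilinearMap ℝ (fun _ : Fin (m + 2) => (Fin N → ℝ)) ℝ,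
        ∑ j₁ : Fin N, Real.sqrt (∑ j : Fin (m + 1) → Fin N,
            |U (Fin.cons (Pi.single j₁ 1) (fun i => Pi.single (j i) 1))| ^ 2)
          ≤ C * ‖U‖) :
    Real.sqrt 2 ^ (m + 1) ≤ C := by
  have hU := h _ (Nat.two_pow_pos (m + 1)) (MixedLittlewood.extremalForm (m + 1))
  simp only [MixedLittlewood.sum_sq_extremalForm_single, Real.sqrt_pow_of_nonneg zero_le_two,
    sum_const, card_univ, Fintype.card_fin, nsmul_eq_mul, Nat.cast_pow, Nat.cast_ofNat] at hU
  have hK : (2 : ℝ) ^ (m + 1) * Real.sqrt 2 ^ (m + 1) ≤ 2 ^ (m + 1) * C :=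
    calc _ ≤ C * ‖MixedLittlewood.extremalForm (m + 1)‖ := hU
      _ ≤ C * 2 ^ (m + 1) :=
        mul_le_mul_of_nonneg_left (MixedLittlewood.norm_extremalForm_le _) hC
      _ = 2 ^ (m + 1) * C := mul_comm _ _
  exact le_of_mul_le_mul_left hK (by positivity)
end

section
/- Let T₂ : ℝ² × ℝ² → ℝ be the bilinear form T₂(x,y) = x₁y₁ + x₁y₂ + x₂y₁ − x₂y₂. Then Σ_{i=1}^{2} ( Σ_{j=1}^{2} |T₂(e_i,e_j)|² )^{1/2} = 2√2, where e₁, e₂ are the standard basis vectors of ℝ². Consequently, any constant C ≥ 0 such that Σ_{i=1}^{N} ( Σ_{j=1}^{N} |U(e_i,e_j)|² )^{1/2} ≤ C‖U‖ for all N and all continuous bilinear forms U on ℝ^N × ℝ^N (sup norm) satisfies C ≥ √2. -/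
/-- For the bilinear form `T₂(x,y) = x₁y₁ + x₁y₂ + x₂y₁ − x₂y₂` on `ℝ² × ℝ²`
(sup norm), `∑_{i=1}^{2} (∑_{j=1}^{2} |T₂(e_i,e_j)|²)^{1/2} = 2√2`; consequently
every constant `C ≥ 0` valid for the bilinear mixed `(ℓ₁,ℓ₂)`-Littlewood
inequality satisfies `C ≥ √2`. -/
theorem T2_sum_and_lower_bound (T₂ : (Fin 2 → ℝ) →L[ℝ] (Fin 2 → ℝ) →L[ℝ] ℝ)
    (hT : ∀ x y : Fin 2 → ℝ,
      T₂ x y = x 0 * y 0 + x 0 * y 1 + x 1 * y 0 - x 1 * y 1) :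
    (∑ i : Fin 2, Real.sqrt (∑ j : Fin 2, |T₂ (Pi.single i 1) (Pi.single j 1)| ^ 2)
        = 2 * Real.sqrt 2) ∧
    ∀ C : ℝ, 0 ≤ C →
      (∀ N : ℕ, 0 < N → ∀ U : (Fin N → ℝ) →L[ℝ] (Fin N → ℝ) →L[ℝ] ℝ,
        ∑ i : Fin N, Real.sqrt (∑ j : Fin N, |U (Pi.single i 1) (Pi.single j 1)| ^ 2)
          ≤ C * ‖U‖) →
      Real.sqrt 2 ≤ C := by
  have key : (∑ i : Fin 2, Real.sqrt (∑ j : Fin 2,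
      |T₂ (Pi.single i 1) (Pi.single j 1)| ^ 2)) = 2 * Real.sqrt 2 := by
    simp [Fin.sum_univ_two, hT, Pi.single_apply]
    ring_nf
  refine ⟨key, fun C hC h => ?_⟩
  have hnorm : ‖T₂‖ ≤ 2 := by
    refine T₂.opNorm_le_bound (by norm_num) fun x => ?_
    refine (T₂ x).opNorm_le_bound (by positivity) fun y => ?_
    rw [hT]
    have hx0 : |x 0| ≤ ‖x‖ := by simpa using norm_le_pi_norm x 0
    have hx1 : |x 1| ≤ ‖x‖ := by simpa using norm_le_pi_norm x 1
    have hy0 : |y 0| ≤ ‖y‖ := by simpa using norm_le_pi_norm y 0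
    have hy1 : |y 1| ≤ ‖y‖ := by simpa using norm_le_pi_norm y 1
    have hxn : (0:ℝ) ≤ ‖x‖ := norm_nonneg x
    have key2 : |y 0 + y 1| + |y 0 - y 1| ≤ 2 * ‖y‖ := by
      rcases abs_cases (y 0 + y 1) with ⟨h1, _⟩ | ⟨h1, _⟩ <;>
        rcases abs_cases (y 0 - y 1) with ⟨h2, _⟩ | ⟨h2, _⟩ <;>
        rcases abs_le.mp hy0 with ⟨a, b⟩ <;>
        rcases abs_le.mp hy1 with ⟨c, d⟩ <;> linarith
    have : x 0 * y 0 + x 0 * y 1 + x 1 * y 0 - x 1 * y 1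
        = x 0 * (y 0 + y 1) + x 1 * (y 0 - y 1) := by ring
    rw [Real.norm_eq_abs, this]
    calc |x 0 * (y 0 + y 1) + x 1 * (y 0 - y 1)|
        ≤ |x 0| * |y 0 + y 1| + |x 1| * |y 0 - y 1| := by
          simpa [abs_mul] using abs_add_le (x 0 * (y 0 + y 1)) (x 1 * (y 0 - y 1))
      _ ≤ ‖x‖ * |y 0 + y 1| + ‖x‖ * |y 0 - y 1| := by
          gcongr
      _ = ‖x‖ * (|y 0 + y 1| + |y 0 - y 1|) := by ring
      _ ≤ ‖x‖ * (2 * ‖y‖) := by gcongr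
      _ = 2 * ‖x‖ * ‖y‖ := by ring
  have h2 := h 2 (by norm_num) T₂
  rw [key] at h2
  have : 2 * Real.sqrt 2 ≤ C * 2 := h2.trans (by nlinarith [norm_nonneg T₂])
  linarith
end

section
/- Let T₃ : ℝ⁴ × ℝ⁴ × ℝ⁴ → ℝ be the trilinear form T₃(x,y,z) = (z₁+z₂)(x₁y₁ + x₁y₂ + x₂y₁ − x₂y₂) + (z₁−z₂)(x₃y₃ + x₃y₄ + x₄y₃ − x₄y₄), where ℝ⁴ carries the sup norm. Then ‖T₃‖ = 4 and Σ_{i₁=1}^{4} ( Σ_{i₂,i₃=1}^{4} |T₃(e_{i₁},e_{i₂},e_{i₃})|² )^{1/2} = 8, where e₁,...,e₄ are the standard basis vectors of ℝ⁴; hence any valid constant C for the trilinear mixed (ℓ₁,ℓ₂)-Littlewood inequality satisfies C ≥ 2. -/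
/-!
Write `T₃(x,y,z) = (z₁+z₂)·A + (z₁−z₂)·B` with `A = (y₁+y₂)·x₁ + (y₁−y₂)·x₂` and `B` the same
pattern in the coordinates `3, 4`. Since `|u+v| + |u−v| ≤ 2·max(|u|,|v|)`, the layer in `y` and the
layer in `z` each cost a factor `2`, so `‖T₃‖ ≤ 4`, with equality at `(𝟙, 𝟙, e₁)`. Each slice
`T₃(e_{i₁},·,·)` has exactly four entries `±1`, so the mixed sum is `4·2 = 8`, and a Littlewood
constant `C` must satisfy `8 ≤ 4·C`.
-/

theorem abs_add_add_abs_sub_le {u v a : ℝ} (hu : |u| ≤ a) (hv : |v| ≤ a) :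
    |u + v| + |u - v| ≤ 2 * a := by
  rw [abs_le] at hu hv
  rcases abs_cases (u + v) with ⟨h, _⟩ | ⟨h, _⟩ <;>
    rcases abs_cases (u - v) with ⟨h', _⟩ | ⟨h', _⟩ <;> linarith

theorem abs_add_mul_add_sub_mul_le {u v p q a b : ℝ} (hu : |u| ≤ a) (hv : |v| ≤ a)
    (hp : |p| ≤ b) (hq : |q| ≤ b) : |(u + v) * p + (u - v) * q| ≤ 2 * a * b :=
  calc |(u + v) * p + (u - v) * q| ≤ |u + v| * |p| + |u - v| * |q| := by
        simpa only [abs_mul] using abs_add_le ((u + v) * p) ((u - v) * q)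
    _ ≤ |u + v| * b + |u - v| * b := by gcongr
    _ = (|u + v| + |u - v|) * b := by ring
    _ ≤ 2 * a * b := by gcongr; exacts [(abs_nonneg p).trans hp, abs_add_add_abs_sub_le hu hv]

theorem ContinuousMultilinearMap.opNorm_eq_of_bound_of_le_apply {𝕜 ι : Type*} {E : ι → Type*}
    {G : Type*} [NontriviallyNormedField 𝕜] [Fintype ι] [∀ i, SeminormedAddCommGroup (E i)]
    [∀ i, NormedSpace 𝕜 (E i)] [SeminormedAddCommGroup G] [NormedSpace 𝕜 G]
    {f : ContinuousMultilinearMap 𝕜 E G} {M : ℝ} (hM : 0 ≤ M)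
    (hbound : ∀ m, ‖f m‖ ≤ M * ∏ i, ‖m i‖) {m₀ : ∀ i, E i} (hm₀ : ‖m₀‖ ≤ 1)
    (hattained : M ≤ ‖f m₀‖) : ‖f‖ = M :=
  le_antisymm (f.opNorm_le_bound hM hbound) (hattained.trans (f.unit_le_opNorm hm₀))

def t3 (x y z : Fin 4 → ℝ) : ℝ :=
  (z 0 + z 1) * (x 0 * y 0 + x 0 * y 1 + x 1 * y 0 - x 1 * y 1)
    + (z 0 - z 1) * (x 2 * y 2 + x 2 * y 3 + x 3 * y 2 - x 3 * y 3)

theorem abs_t3_le (x y z : Fin 4 → ℝ) : |t3 x y z| ≤ 4 * (‖x‖ * ‖y‖ * ‖z‖) := by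
  have hx (i : Fin 4) : |x i| ≤ ‖x‖ := norm_le_pi_norm x i
  have hy (i : Fin 4) : |y i| ≤ ‖y‖ := norm_le_pi_norm y i
  have hz (i : Fin 4) : |z i| ≤ ‖z‖ := norm_le_pi_norm z i
  have hA := abs_add_mul_add_sub_mul_le (hy 0) (hy 1) (hx 0) (hx 1)
  have hB := abs_add_mul_add_sub_mul_le (hy 2) (hy 3) (hx 2) (hx 3)
  have hAB := abs_add_mul_add_sub_mul_le (hz 0) (hz 1) hA hB
  refine (le_of_eq ?_).trans (hAB.trans_eq ?_)
  · unfold t3; ring_nf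
  · ring

theorem t3_one_one_single : t3 1 1 (Pi.single 0 1) = 4 := by
  norm_num [t3]

theorem sum_sqrt_sum_sq_t3_single :
    ∑ i₁ : Fin 4, √(∑ i₂ : Fin 4, ∑ i₃ : Fin 4,
      |t3 (Pi.single i₁ 1) (Pi.single i₂ 1) (Pi.single i₃ 1)| ^ 2) = 8 := by
  have h4 : √4 = 2 := by
    rw [show (4 : ℝ) = 2 ^ 2 by norm_num, Real.sqrt_sq zero_le_two]
  simp only [Fin.sum_univ_four, t3, Pi.single_apply, Fin.reduceEq, if_true, if_false]
  norm_num [h4]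

/-- For the trilinear form
`T₃(x,y,z) = (z₁+z₂)(x₁y₁+x₁y₂+x₂y₁−x₂y₂) + (z₁−z₂)(x₃y₃+x₃y₄+x₄y₃−x₄y₄)` on
`(ℝ⁴)³` (sup norm), one has `‖T₃‖ = 4` and
`∑_{i₁=1}^{4} (∑_{i₂,i₃=1}^{4} |T₃(e_{i₁},e_{i₂},e_{i₃})|²)^{1/2} = 8`; hence
every valid constant `C ≥ 0` of the trilinear mixed `(ℓ₁,ℓ₂)`-Littlewood
inequality satisfies `C ≥ 2`. -/
theorem T3_norm_sum_and_lower_bound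
    (T₃ : ContinuousMultilinearMap ℝ (fun _ : Fin 3 => (Fin 4 → ℝ)) ℝ)
    (hT : ∀ x y z : Fin 4 → ℝ,
      T₃ ![x, y, z] = (z 0 + z 1) * (x 0 * y 0 + x 0 * y 1 + x 1 * y 0 - x 1 * y 1)
        + (z 0 - z 1) * (x 2 * y 2 + x 2 * y 3 + x 3 * y 2 - x 3 * y 3)) :
    ‖T₃‖ = 4 ∧
    (∑ i₁ : Fin 4, Real.sqrt (∑ i₂ : Fin 4, ∑ i₃ : Fin 4,
        |T₃ ![Pi.single i₁ 1, Pi.single i₂ 1, Pi.single i₃ 1]| ^ 2) = 8) ∧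
    ∀ C : ℝ, 0 ≤ C →
      (∀ N : ℕ, 0 < N →
        ∀ U : ContinuousMultilinearMap ℝ (fun _ : Fin 3 => (Fin N → ℝ)) ℝ,
          ∑ j₁ : Fin N, Real.sqrt (∑ j₂ : Fin N, ∑ j₃ : Fin N,
              |U ![Pi.single j₁ 1, Pi.single j₂ 1, Pi.single j₃ 1]| ^ 2)
            ≤ C * ‖U‖) →
      2 ≤ C := by
  have hT₃ (m : Fin 3 → Fin 4 → ℝ) : T₃ m = t3 (m 0) (m 1) (m 2) :=
    calc T₃ m = T₃ ![m 0, m 1, m 2] := by congr 1; ext i; fin_cases i <;> rfl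
      _ = t3 (m 0) (m 1) (m 2) := hT _ _ _
  have hnorm : ‖T₃‖ = 4 := by
    refine ContinuousMultilinearMap.opNorm_eq_of_bound_of_le_apply zero_le_four (fun m ↦ ?_)
      (m₀ := ![1, 1, Pi.single 0 1]) ?_ ?_
    · simpa [hT₃, Fin.prod_univ_three] using abs_t3_le (m 0) (m 1) (m 2)
    · refine (pi_norm_le_iff_of_nonneg zero_le_one).2 fun i ↦ ?_
      fin_cases i <;> simp [Pi.norm_single]
    · simp [hT₃, t3_one_one_single]
  have hsum : ∑ i₁ : Fin 4, √(∑ i₂ : Fin 4, ∑ i₃ : Fin 4,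
      |T₃ ![Pi.single i₁ 1, Pi.single i₂ 1, Pi.single i₃ 1]| ^ 2) = 8 := by
    simp only [hT]
    exact sum_sqrt_sum_sq_t3_single
  refine ⟨hnorm, hsum, fun C _ hC ↦ ?_⟩
  have h := hC 4 four_pos T₃
  rw [hsum, hnorm] at h
  linarith
end

section
/- Let T₄ : (ℝ⁸)⁴ → ℝ be the 4-linear form T₄(x,y,z,w) = (w₁+w₂)[(z₁+z₂)(x₁y₁+x₁y₂+x₂y₁−x₂y₂) + (z₁−z₂)(x₃y₃+x₃y₄+x₄y₃−x₄y₄)] + (w₁−w₂)[(z₃+z₄)(x₅y₅+x₅y₆+x₆y₅−x₆y₆) + (z₃−z₄)(x₇y₇+x₇y₈+x₈y₇−x₈y₈)], where ℝ⁸ carries the sup norm. Then ‖T₄‖ = 8 and Σ_{i₁=1}^{8} ( Σ_{i₂,i₃,i₄=1}^{8} |T₄(e_{i₁},e_{i₂},e_{i₃},e_{i₄})|² )^{1/2} = 8√8. -/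
/-!
`T₄` is a three-level tree of "butterflies" `(a + b) A + (a - b) B`, branching on `w`, on `z`,
and on `y`. Since `|a + b| + |a - b| = 2 max (|a|, |b|)`, each level costs at most a factor `2`
in the sup norm, giving `‖T₄‖ ≤ 8`, and `x = y = 1`, `z = w = (1, 0, 1, 0, …)` attain `8`.
Every monomial of `T₄` has coefficient `±1`, and each variable `xᵢ` occurs in exactly `8` of
them, so every inner sum of squares is `8`.
-/

open Finset

section Butterfly

variable {R : Type*} [CommRing R]

def butterfly (a b A B : R) : R := (a + b) * A + (a - b) * B

lemma map_butterfly {S : Type*} [CommRing S] (f : R →+* S) (a b A B : R) :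
    f (butterfly a b A B) = butterfly (f a) (f b) (f A) (f B) := by
  simp only [butterfly, map_add, map_sub, map_mul]

lemma abs_butterfly_le {a b A B c M : ℝ} (ha : |a| ≤ c) (hb : |b| ≤ c)
    (hA : |A| ≤ M) (hB : |B| ≤ M) : |butterfly a b A B| ≤ 2 * c * M := by
  have hM : 0 ≤ M := (abs_nonneg A).trans hA
  have hsigns : |a + b| + |a - b| ≤ 2 * c := by
    rw [abs_le] at ha hb
    rcases abs_cases (a + b) with ⟨h, _⟩ | ⟨h, _⟩ <;>
      rcases abs_cases (a - b) with ⟨h', _⟩ | ⟨h', _⟩ <;> linarith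
  calc |butterfly a b A B| ≤ |a + b| * |A| + |a - b| * |B| := by
        simpa only [butterfly, abs_mul] using abs_add_le ((a + b) * A) ((a - b) * B)
    _ ≤ |a + b| * M + |a - b| * M := by gcongr
    _ = (|a + b| + |a - b|) * M := by ring
    _ ≤ 2 * c * M := by gcongr

end Butterfly

section FormT4

variable {R : Type*} [CommRing R]

/-- The bilinear block `xᵢyᵢ + xᵢyⱼ + xⱼyᵢ - xⱼyⱼ` of `T₄`. -/
def pairBlock (x y : Fin 8 → R) (i j : Fin 8) : R := butterfly (y i) (y j) (x i) (x j)

def formT4 (x y z w : Fin 8 → R) : R :=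
  butterfly (w 0) (w 1)
    (butterfly (z 0) (z 1) (pairBlock x y 0 1) (pairBlock x y 2 3))
    (butterfly (z 2) (z 3) (pairBlock x y 4 5) (pairBlock x y 6 7))

lemma map_formT4 {S : Type*} [CommRing S] (f : R →+* S) (x y z w : Fin 8 → R) :
    f (formT4 x y z w) = formT4 (f ∘ x) (f ∘ y) (f ∘ z) (f ∘ w) := by
  simp only [formT4, pairBlock, map_butterfly, Function.comp_apply]

end FormT4

lemma abs_formT4_le (x y z w : Fin 8 → ℝ) :
    |formT4 x y z w| ≤ 8 * (‖x‖ * ‖y‖ * ‖z‖ * ‖w‖) := by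
  have hcoord (v : Fin 8 → ℝ) (i : Fin 8) : |v i| ≤ ‖v‖ := by
    simpa only [Real.norm_eq_abs] using norm_le_pi_norm v i
  have hpair (i j : Fin 8) : |pairBlock x y i j| ≤ 2 * ‖y‖ * ‖x‖ :=
    abs_butterfly_le (hcoord y i) (hcoord y j) (hcoord x i) (hcoord x j)
  have hz (i j k l m n : Fin 8) :
      |butterfly (z i) (z j) (pairBlock x y k l) (pairBlock x y m n)|
        ≤ 2 * ‖z‖ * (2 * ‖y‖ * ‖x‖) :=
    abs_butterfly_le (hcoord z i) (hcoord z j) (hpair k l) (hpair m n)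
  calc |formT4 x y z w| ≤ 2 * ‖w‖ * (2 * ‖z‖ * (2 * ‖y‖ * ‖x‖)) :=
        abs_butterfly_le (hcoord w 0) (hcoord w 1) (hz ..) (hz ..)
    _ = 8 * (‖x‖ * ‖y‖ * ‖z‖ * ‖w‖) := by ring

def extremalPoint : Fin 4 → Fin 8 → ℝ :=
  ![1, 1, ![1, 0, 1, 0, 1, 0, 1, 0], ![1, 0, 1, 0, 1, 0, 1, 0]]

lemma norm_extremalPoint_le : ‖extremalPoint‖ ≤ 1 := by
  refine (pi_norm_le_iff_of_nonneg zero_le_one).2 fun i ↦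
    (pi_norm_le_iff_of_nonneg zero_le_one).2 fun j ↦ ?_
  fin_cases i <;> fin_cases j <;> simp [extremalPoint]

lemma formT4_extremalPoint :
    formT4 (extremalPoint 0) (extremalPoint 1) (extremalPoint 2) (extremalPoint 3) = 8 := by
  simp only [extremalPoint, formT4, pairBlock, butterfly, Matrix.cons_val, Pi.one_apply]
  norm_num

lemma sum_sq_formT4_single_int (i : Fin 8) :
    ∑ j, ∑ k, ∑ l,
      formT4 (Pi.single i 1) (Pi.single j 1) (Pi.single k 1) (Pi.single l (1 : ℤ)) ^ 2 = 8 := by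
  revert i
  decide

lemma sum_sq_formT4_single (i : Fin 8) :
    ∑ j, ∑ k, ∑ l,
      formT4 (Pi.single i 1) (Pi.single j 1) (Pi.single k 1) (Pi.single l (1 : ℝ)) ^ 2 = 8 := by
  have hsingle (j : Fin 8) : Int.castRingHom ℝ ∘ Pi.single j 1 = Pi.single j 1 := by
    funext k
    by_cases h : k = j <;> simp [h]
  simpa only [map_sum, map_pow, map_formT4, hsingle, map_ofNat]
    using congrArg (Int.castRingHom ℝ) (sum_sq_formT4_single_int i)

/-- For the 4-linear form `T₄` on `(ℝ⁸)⁴` (sup norm) given by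
`T₄(x,y,z,w) = (w₁+w₂)[(z₁+z₂)(x₁y₁+x₁y₂+x₂y₁−x₂y₂)+(z₁−z₂)(x₃y₃+x₃y₄+x₄y₃−x₄y₄)]
 + (w₁−w₂)[(z₃+z₄)(x₅y₅+x₅y₆+x₆y₅−x₆y₆)+(z₃−z₄)(x₇y₇+x₇y₈+x₈y₇−x₈y₈)]`,
one has `‖T₄‖ = 8` and
`∑_{i₁=1}^{8} (∑_{i₂,i₃,i₄=1}^{8} |T₄(e_{i₁},e_{i₂},e_{i₃},e_{i₄})|²)^{1/2} = 8√8`. -/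
theorem T4_norm_and_sum
    (T₄ : ContinuousMultilinearMap ℝ (fun _ : Fin 4 => (Fin 8 → ℝ)) ℝ)
    (hT : ∀ x y z w : Fin 8 → ℝ,
      T₄ ![x, y, z, w] =
        (w 0 + w 1) *
          ((z 0 + z 1) * (x 0 * y 0 + x 0 * y 1 + x 1 * y 0 - x 1 * y 1)
            + (z 0 - z 1) * (x 2 * y 2 + x 2 * y 3 + x 3 * y 2 - x 3 * y 3))
        + (w 0 - w 1) *
          ((z 2 + z 3) * (x 4 * y 4 + x 4 * y 5 + x 5 * y 4 - x 5 * y 5)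
            + (z 2 - z 3) * (x 6 * y 6 + x 6 * y 7 + x 7 * y 6 - x 7 * y 7))) :
    ‖T₄‖ = 8 ∧
    ∑ i₁ : Fin 8, Real.sqrt (∑ i₂ : Fin 8, ∑ i₃ : Fin 8, ∑ i₄ : Fin 8,
        |T₄ ![Pi.single i₁ 1, Pi.single i₂ 1, Pi.single i₃ 1, Pi.single i₄ 1]| ^ 2)
      = 8 * Real.sqrt 8 := by
  have hT₄ (m : Fin 4 → Fin 8 → ℝ) : T₄ m = formT4 (m 0) (m 1) (m 2) (m 3) := by
    have hm : m = ![m 0, m 1, m 2, m 3] := by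
      funext i; fin_cases i <;> rfl
    rw [hm, hT]
    simp only [formT4, pairBlock, butterfly, Matrix.cons_val]
    ring
  have hupper : ‖T₄‖ ≤ 8 := by
    refine T₄.opNorm_le_bound (by norm_num) fun m ↦ ?_
    simpa only [hT₄, Real.norm_eq_abs, Fin.prod_univ_four]
      using abs_formT4_le (m 0) (m 1) (m 2) (m 3)
  have hlower : 8 ≤ ‖T₄‖ := by
    simpa [hT₄, formT4_extremalPoint] using T₄.unit_le_opNorm norm_extremalPoint_le
  refine ⟨le_antisymm hupper hlower, ?_⟩
  simp only [hT₄, sq_abs, Matrix.cons_val, sum_sq_formT4_single, sum_const, card_univ,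
    Fintype.card_fin, nsmul_eq_mul, Nat.cast_ofNat]
end

section
/- Define m-linear forms T_m : (ℝ^{2^{m-1}})^m → ℝ inductively by T₂(x,y) = x₁y₁ + x₁y₂ + x₂y₁ − x₂y₂ and, for m ≥ 3, T_m(x¹,...,x^m) = (x^m₁ + x^m₂)·T_{m-1}(x¹,...,x^{m-1}) + (x^m₁ − x^m₂)·T_{m-1}(B^{2^{m-2}}x¹, B^{2^{m-2}}x², B^{2^{m-3}}x³, ..., B²x^{m-1}), where B is the backward shift operator (B(x)ᵢ = x_{i+1}) and each factor ℝ^{2^{m-1}} carries the sup norm (lower-index forms being applied to truncations of the shifted vectors). Then ‖T_m‖ = 2^{m-1} for all m ≥ 2. -/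
/-- The backward shift operator on sequences: `(B x)ᵢ = x_{i+1}`. -/
def backShift (x : ℕ → ℝ) : ℕ → ℝ := fun n => x (n + 1)

/-- The inductively defined `m`-linear forms of Pellegrino:
`T₂(x,y) = x₁y₁ + x₁y₂ + x₂y₁ − x₂y₂` and, for `m ≥ 3`,
`T_m(x¹,...,x^m) = (x^m₁ + x^m₂)·T_{m-1}(x¹,...,x^{m-1})
  + (x^m₁ − x^m₂)·T_{m-1}(B^{2^{m-2}}x¹, B^{2^{m-2}}x², B^{2^{m-3}}x³, ..., B²x^{m-1})`,
defined here on `m`-tuples of sequences; below they are applied to vectors of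
`ℝ^{2^{m-1}}` extended by zero. -/
def Tform : (m : ℕ) → (Fin m → (ℕ → ℝ)) → ℝ
  | 0, _ => 0
  | 1, _ => 0
  | 2, x => x 0 0 * x 1 0 + x 0 0 * x 1 1 + x 0 1 * x 1 0 - x 0 1 * x 1 1
  | (m + 3), x =>
      (x (Fin.last (m + 2)) 0 + x (Fin.last (m + 2)) 1) *
        Tform (m + 2) (fun i => x i.castSucc)
      + (x (Fin.last (m + 2)) 0 - x (Fin.last (m + 2)) 1) *
        Tform (m + 2) (fun i =>
          backShift^[if (i : ℕ) = 0 then 2 ^ (m + 1) else 2 ^ (m + 2 - (i : ℕ))]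
            (x i.castSucc))

lemma backShift_iterate (k : ℕ) (y : ℕ → ℝ) (n : ℕ) :
    backShift^[k] y n = y (n + k) := by
  induction k generalizing y n with
  | zero => simp
  | succ k ih =>
    rw [Function.iterate_succ_apply, ih]
    simp [backShift, Nat.add_assoc]

lemma abs_key {a b : ℝ} (ha : |a| ≤ 1) (hb : |b| ≤ 1) : |a + b| + |a - b| ≤ 2 := by
  rw [abs_le] at ha hb
  rcases abs_cases (a + b) with ⟨h1, _⟩ | ⟨h1, _⟩ <;>
    rcases abs_cases (a - b) with ⟨h2, _⟩ | ⟨h2, _⟩ <;> linarith [ha.1, ha.2, hb.1, hb.2]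

lemma Tform_le (m : ℕ) (x : Fin (m + 2) → (ℕ → ℝ)) (hx : ∀ i n, |x i n| ≤ 1) :
    |Tform (m + 2) x| ≤ 2 ^ (m + 1) := by
  induction m with
  | zero =>
    have h := abs_key (hx 1 0) (hx 1 1)
    have h0 := abs_nonneg (x 1 0 + x 1 1)
    have h1 := abs_nonneg (x 1 0 - x 1 1)
    have e : Tform 2 x = x 0 0 * (x 1 0 + x 1 1) + x 0 1 * (x 1 0 - x 1 1) := by
      simp [Tform]; ring
    rw [e]
    calc |x 0 0 * (x 1 0 + x 1 1) + x 0 1 * (x 1 0 - x 1 1)|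
        ≤ |x 0 0| * |x 1 0 + x 1 1| + |x 0 1| * |x 1 0 - x 1 1| := by
          refine (abs_add_le _ _).trans ?_
          rw [abs_mul, abs_mul]
      _ ≤ 1 * |x 1 0 + x 1 1| + 1 * |x 1 0 - x 1 1| := by
          gcongr <;> first | exact hx 0 0 | exact hx 0 1
      _ ≤ 2 ^ 1 := by simpa using h
  | succ k ih =>
    set a := x (Fin.last (k + 2)) 0
    set b := x (Fin.last (k + 2)) 1
    have key := abs_key (hx (Fin.last (k + 2)) 0) (hx (Fin.last (k + 2)) 1)
    have hT1 : |Tform (k + 2) (fun i => x i.castSucc)| ≤ 2 ^ (k + 1) :=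
      ih _ (fun i n => hx i.castSucc n)
    have hT2 : |Tform (k + 2) (fun i =>
        backShift^[if (i : ℕ) = 0 then 2 ^ (k + 1) else 2 ^ (k + 2 - (i : ℕ))]
          (x i.castSucc))| ≤ 2 ^ (k + 1) := by
      refine ih _ (fun i n => ?_)
      rw [backShift_iterate]
      exact hx i.castSucc _
    have e : Tform (k + 3) x =
        (a + b) * Tform (k + 2) (fun i => x i.castSucc)
        + (a - b) * Tform (k + 2) (fun i =>
            backShift^[if (i : ℕ) = 0 then 2 ^ (k + 1) else 2 ^ (k + 2 - (i : ℕ))]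
              (x i.castSucc)) := rfl
    rw [e]
    calc |(a + b) * _ + (a - b) * _|
        ≤ |a + b| * |Tform (k + 2) (fun i => x i.castSucc)|
          + |a - b| * |Tform (k + 2) (fun i =>
              backShift^[if (i : ℕ) = 0 then 2 ^ (k + 1) else 2 ^ (k + 2 - (i : ℕ))]
                (x i.castSucc))| := by
          refine (abs_add_le _ _).trans ?_
          rw [abs_mul, abs_mul]
      _ ≤ |a + b| * 2 ^ (k + 1) + |a - b| * 2 ^ (k + 1) := by
          gcongr <;> positivity
      _ = (|a + b| + |a - b|) * 2 ^ (k + 1) := by ring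
      _ ≤ 2 * 2 ^ (k + 1) := by
          have : (0:ℝ) ≤ 2 ^ (k + 1) := by positivity
          nlinarith
      _ = 2 ^ (k + 2) := by ring

lemma Tform_ones (m : ℕ) (x : Fin (m + 2) → (ℕ → ℝ))
    (hx : ∀ i, ∀ n < 2 ^ (m + 1), x i n = 1) :
    Tform (m + 2) x = 2 ^ (m + 1) := by
  induction m with
  | zero =>
    have h00 := hx 0 0 (by norm_num)
    have h01 := hx 0 1 (by norm_num)
    have h10 := hx 1 0 (by norm_num)
    have h11 := hx 1 1 (by norm_num)
    simp [Tform, h00, h01, h10, h11]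
    norm_num
  | succ k ih =>
    have h0 : x (Fin.last (k + 2)) 0 = 1 := hx _ 0 (by positivity)
    have h1 : x (Fin.last (k + 2)) 1 = 1 := hx _ 1 (Nat.one_lt_two_pow (by omega))
    have hT : Tform (k + 2) (fun i => x i.castSucc) = 2 ^ (k + 1) :=
      ih _ (fun i n hn => hx i.castSucc n (hn.trans (by
        exact Nat.pow_lt_pow_right (by norm_num) (by omega))))
    show (x (Fin.last (k + 2)) 0 + x (Fin.last (k + 2)) 1) *
        Tform (k + 2) (fun i => x i.castSucc)
      + (x (Fin.last (k + 2)) 0 - x (Fin.last (k + 2)) 1) * _ = 2 ^ (k + 2)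
    rw [h0, h1, hT]
    ring

/-- `‖T_m‖ = 2^{m-1}` for all `m ≥ 2` (here `m` is written as `m + 2`): the operator
norm of `T_m` on `(ℝ^{2^{m-1}})^m` (with the sup norm on each factor), i.e. the supremum
of `|T_m(x¹,...,x^m)|` over vectors of sup-norm at most `1`, equals `2^{m-1}`. -/
theorem Tform_norm (m : ℕ) :
    sSup {y : ℝ | ∃ x : Fin (m + 2) → (Fin (2 ^ (m + 1)) → ℝ),
        (∀ i, ‖x i‖ ≤ 1) ∧
        y = |Tform (m + 2)
          (fun i => fun n => if h : n < 2 ^ (m + 1) then x i ⟨n, h⟩ else 0)|}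
      = 2 ^ (m + 1) := by
  have hmem : (2:ℝ) ^ (m + 1) ∈ {y : ℝ | ∃ x : Fin (m + 2) → (Fin (2 ^ (m + 1)) → ℝ),
      (∀ i, ‖x i‖ ≤ 1) ∧
      y = |Tform (m + 2)
        (fun i => fun n => if h : n < 2 ^ (m + 1) then x i ⟨n, h⟩ else 0)|} := by
    refine ⟨fun _ _ => 1, fun i => ?_, ?_⟩
    · refine (pi_norm_le_iff_of_nonneg zero_le_one).mpr fun j => ?_
      simp
    · rw [Tform_ones]
      · rw [abs_of_nonneg (by positivity)]
      · intro i n hn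
        simp [hn]
  have hub : ∀ y ∈ {y : ℝ | ∃ x : Fin (m + 2) → (Fin (2 ^ (m + 1)) → ℝ),
      (∀ i, ‖x i‖ ≤ 1) ∧
      y = |Tform (m + 2)
        (fun i => fun n => if h : n < 2 ^ (m + 1) then x i ⟨n, h⟩ else 0)|},
      y ≤ 2 ^ (m + 1) := by
    rintro y ⟨x, hx, rfl⟩
    refine Tform_le m _ fun i n => ?_
    by_cases h : n < 2 ^ (m + 1)
    · simp only [h, dif_pos]
      exact le_trans (by simpa using norm_le_pi_norm (x i) ⟨n, h⟩) (hx i)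
    · simp [h]
  exact le_antisymm (csSup_le ⟨_, hmem⟩ hub) (le_csSup ⟨_, hub⟩ hmem)
end

section
/- Let T_m : (ℝ^{2^{m-1}})^m → ℝ (m ≥ 2) be the m-linear forms defined inductively by T₂(x,y) = x₁y₁ + x₁y₂ + x₂y₁ − x₂y₂ and T_m(x¹,...,x^m) = (x^m₁ + x^m₂)·T_{m-1}(x¹,...,x^{m-1}) + (x^m₁ − x^m₂)·T_{m-1}(B^{2^{m-2}}x¹, B^{2^{m-2}}x², B^{2^{m-3}}x³, ..., B²x^{m-1}), where B is the backward shift operator. Then Σ_{i₁=1}^{2^{m-1}} ( Σ_{i₂,...,i_m=1}^{2^{m-1}} |T_m(e_{i₁},...,e_{i_m})|² )^{1/2} = 2^{m-1}·(√2)^{m-1}. -/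
/-- The standard basis vector `e_j` of `ℝ^{2^{m-1}}`, viewed as a sequence. -/
def stdBasis {d : ℕ} (j : Fin d) : ℕ → ℝ := fun n => if n = (j : ℕ) then 1 else 0


/-!
On basis vectors the form factorises: for `a < 2^{m+1}`,
`T_{m+2}(e_a, e_{b₀}, …, e_{b_m}) = ∏ᵢ h(⌊a / 2^i⌋, bᵢ)`, where `h` is the block-diagonal
Hadamard matrix `diag(H, H, …)` with `H = [[1, 1], [1, -1]]`. This goes by induction on `m`:
in the recursion for `T_{m+3}` the first slot `e_a` is shifted by `2^{m+1}`, so exactly one of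
the two terms survives, according to the top bit of `a`, and its coefficient is the row
`h(⌊a / 2^{m+1}⌋, ·)` evaluated at the last vector; the shifts of the other slots are absorbed
by the periodicity of `h`. Every row of `h` has exactly two entries `±1`, so each inner sum
equals `∏ᵢ 2 = 2^{m+1}`.
-/

/-- Integer indices let `backShift^[k]` act by `z ↦ z - k` without truncation; for `z < 0` this is
the zero sequence. -/
def intBasis (z : ℤ) : ℕ → ℝ := fun n => if (n : ℤ) = z then 1 else 0

/-- Entry `(a, b)` of the block-diagonal matrix `diag(H, H, …)` with `H = !![1, 1; 1, -1]`. -/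
def blockHadamard (a : ℕ) (b : ℤ) : ℝ :=
  if b = 2 * (a / 2 : ℕ) then 1 else if b = 2 * (a / 2 : ℕ) + 1 then (-1) ^ a else 0

lemma stdBasis_eq_intBasis {d : ℕ} (j : Fin d) : stdBasis j = intBasis j := by
  funext n
  simp only [stdBasis, intBasis, Nat.cast_inj]

lemma backShift_iterate_apply (k : ℕ) (x : ℕ → ℝ) (n : ℕ) :
    backShift^[k] x n = x (n + k) := by
  induction k generalizing x with
  | zero => rfl
  | succ k ih => rw [Function.iterate_succ_apply, ih]; rfl

lemma backShift_iterate_intBasis (k : ℕ) (z : ℤ) :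
    backShift^[k] (intBasis z) = intBasis (z - k) := by
  funext n
  simp only [backShift_iterate_apply, intBasis]
  congr 1
  grind

lemma Tform_succ_intBasis (m : ℕ) (j : Fin (m + 3) → ℤ) :
    Tform (m + 3) (fun i => intBasis (j i)) =
      (intBasis (j (Fin.last _)) 0 + intBasis (j (Fin.last _)) 1) *
        Tform (m + 2) (fun i => intBasis (j i.castSucc))
      + (intBasis (j (Fin.last _)) 0 - intBasis (j (Fin.last _)) 1) *
        Tform (m + 2) (fun i => intBasis (j i.castSucc -
          ((if (i : ℕ) = 0 then 2 ^ (m + 1) else 2 ^ (m + 2 - (i : ℕ)) : ℕ) : ℤ))) := by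
  simp only [Tform, backShift_iterate_intBasis]

lemma Tform_intBasis_eq_zero (m : ℕ) (j : Fin (m + 2) → ℤ)
    (hj : j 0 ∉ Set.Ico 0 (2 ^ (m + 1))) :
    Tform (m + 2) (fun i => intBasis (j i)) = 0 := by
  induction m with
  | zero =>
    simp only [zero_add, pow_one, Set.mem_Ico, not_and_or, not_le, not_lt] at hj
    simp only [Tform, intBasis]
    split_ifs <;> first | omega | ring
  | succ m ih =>
    rw [Tform_succ_intBasis, ih, ih, mul_zero, mul_zero, add_zero]
    · simp only [Set.mem_Ico, Fin.castSucc_zero, Fin.val_zero, if_true] at hj ⊢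
      push_cast
      grind
    · simp only [Set.mem_Ico, Fin.castSucc_zero] at hj ⊢
      grind

lemma blockHadamard_zero (b : ℤ) : blockHadamard 0 b = intBasis b 0 + intBasis b 1 := by
  simp only [blockHadamard, intBasis]
  split_ifs <;> first | omega | norm_num

lemma blockHadamard_one (b : ℤ) : blockHadamard 1 b = intBasis b 0 - intBasis b 1 := by
  simp only [blockHadamard, intBasis]
  split_ifs <;> first | omega | norm_num

lemma blockHadamard_add_two_mul (a t : ℕ) (b : ℤ) :
    blockHadamard (a + 2 * t) (b + 2 * t) = blockHadamard a b := by
  have hdiv : (a + 2 * t) / 2 = a / 2 + t := by omega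
  simp only [blockHadamard, hdiv, pow_add, pow_mul, neg_one_sq, one_pow, mul_one]
  push_cast
  split_ifs <;> first | omega | rfl

lemma blockHadamard_add_two_pow_div (n i r : ℕ) (hi : i < n) (b : ℤ) :
    blockHadamard ((r + 2 ^ n) / 2 ^ i) (b + 2 ^ (n - i)) = blockHadamard (r / 2 ^ i) b := by
  obtain ⟨k, rfl⟩ : ∃ k, n = i + k + 1 := ⟨n - i - 1, by omega⟩
  have hdiv : (r + 2 ^ (i + k + 1)) / 2 ^ i = r / 2 ^ i + 2 * 2 ^ k := by
    rw [show 2 ^ (i + k + 1) = 2 * 2 ^ k * 2 ^ i by ring, Nat.add_mul_div_right _ _ (by positivity)]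
  rw [hdiv, show i + k + 1 - i = k + 1 by omega, ← blockHadamard_add_two_mul (r / 2 ^ i) (2 ^ k)]
  push_cast
  rw [pow_succ']

lemma Tform_intBasis (m a : ℕ) (ha : a < 2 ^ (m + 1)) (j : Fin (m + 2) → ℤ) (h0 : j 0 = a) :
    Tform (m + 2) (fun i => intBasis (j i)) =
      ∏ i : Fin (m + 1), blockHadamard (a / 2 ^ (i : ℕ)) (j i.succ) := by
  induction m generalizing a with
  | zero =>
    interval_cases a
    · simp [Tform, blockHadamard_zero, h0, intBasis]
    · simp [Tform, blockHadamard_one, h0, intBasis]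
  | succ m ih =>
    rw [Tform_succ_intBasis, Fin.prod_univ_castSucc]
    simp only [Fin.succ_castSucc, Fin.val_last, Fin.succ_last, Fin.val_castSucc]
    by_cases hlow : a < 2 ^ (m + 1)
    · rw [ih a hlow _ h0, Tform_intBasis_eq_zero, Nat.div_eq_of_lt hlow, blockHadamard_zero]
      · ring
      · simp only [Set.mem_Ico, Fin.castSucc_zero, Fin.val_zero, if_true, h0]
        push_cast
        grind
    · obtain ⟨r, rfl⟩ : ∃ r, a = r + 2 ^ (m + 1) := ⟨a - 2 ^ (m + 1), by omega⟩
      have hr : r < 2 ^ (m + 1) := by rw [pow_succ] at ha; omega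
      have hdiv : (r + 2 ^ (m + 1)) / 2 ^ (m + 1) = 1 := by
        rw [Nat.add_div_right _ (by positivity), Nat.div_eq_of_lt hr]
      rw [Tform_intBasis_eq_zero, ih r hr, hdiv, blockHadamard_one]
      · rw [mul_zero, zero_add, mul_comm]
        congr 1
        refine Finset.prod_congr rfl fun i _ => ?_
        rw [← blockHadamard_add_two_pow_div (m + 1) i r i.is_lt]
        simp only [Fin.val_succ, Nat.add_one_ne_zero, if_false]
        congr 2
        simp
      · simp [h0]
      · simp [h0]

lemma sum_blockHadamard_sq (N a : ℕ) (hN : Even N) (ha : a < N) :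
    ∑ b : Fin N, blockHadamard a b ^ 2 = 2 := by
  have hodd : 2 * (a / 2) + 1 < N := by obtain ⟨k, rfl⟩ := hN; omega
  have hsq (b : Fin N) : blockHadamard a b ^ 2 =
      (if b = ⟨2 * (a / 2), by omega⟩ then 1 else 0) +
        (if b = ⟨2 * (a / 2) + 1, hodd⟩ then 1 else 0) := by
    simp only [blockHadamard, Fin.ext_iff]
    split_ifs <;> first | omega | simp [neg_one_pow_eq_or]
  simp only [hsq, Finset.sum_add_distrib, Fintype.sum_ite_eq']
  norm_num

lemma Tform_cons_stdBasis (m : ℕ) (a : Fin (2 ^ (m + 1)))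
    (b : Fin (m + 1) → Fin (2 ^ (m + 1))) :
    Tform (m + 2) (Fin.cons (stdBasis a) (fun i => stdBasis (b i))) =
      ∏ i : Fin (m + 1), blockHadamard (a / 2 ^ (i : ℕ)) (b i) := by
  have hcons : (Fin.cons (stdBasis a) (fun i => stdBasis (b i)) : Fin (m + 2) → ℕ → ℝ) =
      intBasis ∘ Fin.cons ((a : ℕ) : ℤ) (fun i => ((b i : ℕ) : ℤ)) := by
    simp only [Fin.comp_cons, stdBasis_eq_intBasis]
    rfl
  rw [hcons, Function.comp_def, Tform_intBasis m a a.is_lt _ rfl]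
  simp only [Fin.cons_succ]

lemma sqrt_two_pow (n : ℕ) : √(2 ^ n : ℝ) = √2 ^ n := by
  rw [Real.sqrt_eq_iff_mul_self_eq (by positivity) (by positivity), ← mul_pow,
    Real.mul_self_sqrt zero_le_two]

/-- For the inductively defined `m`-linear forms `T_m` (here `m` is written as `m + 2`),
`∑_{i₁=1}^{2^{m-1}} (∑_{i₂,...,i_m=1}^{2^{m-1}} |T_m(e_{i₁},...,e_{i_m})|²)^{1/2}
  = 2^{m-1}·(√2)^{m-1}`. -/
theorem Tform_mixed_sum (m : ℕ) :
    ∑ j₁ : Fin (2 ^ (m + 1)), Real.sqrt (∑ j : Fin (m + 1) → Fin (2 ^ (m + 1)),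
        |Tform (m + 2) (Fin.cons (stdBasis j₁) (fun i => stdBasis (j i)))| ^ 2)
      = 2 ^ (m + 1) * Real.sqrt 2 ^ (m + 1) := by
  have hrow (a : Fin (2 ^ (m + 1))) : ∑ j : Fin (m + 1) → Fin (2 ^ (m + 1)),
      |Tform (m + 2) (Fin.cons (stdBasis a) (fun i => stdBasis (j i)))| ^ 2 = 2 ^ (m + 1) := by
    have hfactor (i : Fin (m + 1)) :
        ∑ b : Fin (2 ^ (m + 1)), blockHadamard (a / 2 ^ (i : ℕ)) b ^ 2 = 2 :=
      sum_blockHadamard_sq _ _ (Nat.even_pow.2 ⟨even_two, m.succ_ne_zero⟩)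
        ((Nat.div_le_self _ _).trans_lt a.is_lt)
    simp only [Tform_cons_stdBasis, sq_abs, ← Finset.prod_pow]
    rw [← Fintype.prod_sum fun (i : Fin (m + 1)) (b : Fin (2 ^ (m + 1))) =>
      blockHadamard (a / 2 ^ (i : ℕ)) b ^ 2,
      Finset.prod_congr rfl fun i _ => hfactor i, Finset.prod_const,
      Finset.card_univ, Fintype.card_fin]
  simp only [hrow, sqrt_two_pow, Finset.sum_const, Finset.card_univ, Fintype.card_fin, nsmul_eq_mul,
    Nat.cast_pow, Nat.cast_ofNat]
end

section
/- Let m and N be positive integers and let (a_{i₁,...,i_m})_{i₁,...,i_m=1}^{N} be an array of real numbers. Then (1/√2)^m · ( Σ_{i₁,...,i_m=1}^{N} |a_{i₁,...,i_m}|² )^{1/2} ≤ 2^{-mN} · Σ_{ε¹,...,ε^m ∈ {-1,1}^N} | Σ_{i₁,...,i_m=1}^{N} ε¹_{i₁}···ε^m_{i_m} a_{i₁,...,i_m} |, i.e. the ℓ₂-norm of the array is bounded by (√2)^m times the average over all choices of m independent sign vectors of the absolute value of the corresponding signed sum. -/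
/-!
Szarek's inequality `‖b‖₂ ≤ √2 · 𝔼 |∑ εᵢ bᵢ|` is proved by Walsh analysis on `{-1, 1}ⁿ`. The function
`f ε = |∑ εᵢ bᵢ|` is even, and since `∑ᵢ S(flipᵢ ε) = (n - 2) S(ε)` for the signed sum `S`, the
triangle inequality gives `(n - 2) f ≤ ∑ᵢ f ∘ flipᵢ`. Paired with `f`, this says that the Walsh
spectrum of `f` has mean level at most one. Evenness kills level one, so the levels `≥ 2` carry at
most `f̂(∅)²`, i.e. `𝔼 f² ≤ 2 (𝔼 f)²`; and `𝔼 f² = ‖b‖₂²`.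

The multiple inequality follows by induction on `m`: apply Szarek's inequality in the first sign
vector, Minkowski's inequality to move the average over the remaining ones inside the `ℓ₂`-norm,
and the induction hypothesis row by row.
-/

open Finset

lemma sum_pi_fin_succ {β M : Type*} [Fintype β] [AddCommMonoid M] (m : ℕ)
    (g : (Fin (m + 1) → β) → M) : ∑ x, g x = ∑ y, ∑ z : Fin m → β, g (Fin.cons y z) := by
  rw [← (Fin.consEquiv fun _ => β).sum_comp, Fintype.sum_prod_type]
  rfl

lemma sqrt_sum_sq_sum_le {τ κ : Type*} [Fintype τ] [Fintype κ] (g : τ → κ → ℝ) :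
    √(∑ j, (∑ t, g t j) ^ 2) ≤ ∑ t, √(∑ j, g t j ^ 2) := by
  have hnorm (x : κ → ℝ) : ‖WithLp.toLp 2 x‖ = √(∑ j, x j ^ 2) := by
    simp [EuclideanSpace.norm_eq]
  have := norm_sum_le univ fun t => WithLp.toLp 2 (g t)
  simpa [← WithLp.toLp_sum, hnorm] using this

lemma sqrt_sum_mul_sq {κ : Type*} [Fintype κ] {c : ℝ} (hc : 0 ≤ c) (x : κ → ℝ) :
    √(∑ j, (c * x j) ^ 2) = c * √(∑ j, x j ^ 2) := by
  simp_rw [mul_pow, ← mul_sum]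
  rw [Real.sqrt_mul (sq_nonneg c), Real.sqrt_sq hc]

namespace BooleanCube

noncomputable def rademacher (b : Bool) : ℝ := if b then 1 else -1

@[simp] lemma rademacher_not (b : Bool) : rademacher (!b) = -rademacher b := by
  cases b <;> simp [rademacher]

lemma rademacher_mul_self (b : Bool) : rademacher b * rademacher b = 1 := by
  cases b <;> norm_num [rademacher]

variable {ι : Type*} [DecidableEq ι]

def flipAt (i : ι) (ε : ι → Bool) : ι → Bool := Function.update ε i (!ε i)

@[simp] lemma flipAt_apply_self (i : ι) (ε : ι → Bool) : flipAt i ε i = !ε i := by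
  simp [flipAt]

lemma flipAt_apply_of_ne {i j : ι} (h : j ≠ i) (ε : ι → Bool) : flipAt i ε j = ε j :=
  Function.update_of_ne h _ _

lemma flipAt_involutive (i : ι) : Function.Involutive (flipAt i) := by
  intro ε
  ext j
  rcases eq_or_ne j i with rfl | h
  · simp
  · simp [flipAt_apply_of_ne h]

noncomputable def walsh (A : Finset ι) (ε : ι → Bool) : ℝ := ∏ i ∈ A, rademacher (ε i)

lemma walsh_flipAt (A : Finset ι) (i : ι) (ε : ι → Bool) :
    walsh A (flipAt i ε) = (if i ∈ A then -1 else 1) * walsh A ε := by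
  have hoff : ∀ j ∈ A.erase i, rademacher (flipAt i ε j) = rademacher (ε j) :=
    fun j hj => by rw [flipAt_apply_of_ne (ne_of_mem_erase hj)]
  split_ifs with h
  · rw [walsh, walsh, ← mul_prod_erase A _ h, ← mul_prod_erase A (fun j => rademacher (ε j)) h,
      prod_congr rfl hoff, flipAt_apply_self, rademacher_not]
    ring
  · rw [one_mul, walsh, ← erase_eq_of_notMem h]
    exact prod_congr rfl hoff

omit [DecidableEq ι] in
lemma walsh_not (A : Finset ι) (ε : ι → Bool) :
    walsh A (fun j => !ε j) = (-1) ^ A.card * walsh A ε := by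
  simp [walsh, ← prod_const, ← prod_mul_distrib]

variable [Fintype ι]

noncomputable def walshCoeff (f : (ι → Bool) → ℝ) (A : Finset ι) : ℝ := ∑ ε, f ε * walsh A ε

lemma walshCoeff_empty (f : (ι → Bool) → ℝ) : walshCoeff f ∅ = ∑ ε, f ε := by
  simp [walshCoeff, walsh]

omit [DecidableEq ι] in
lemma sum_walsh_mul_walsh (η ε : ι → Bool) :
    ∑ A : Finset ι, walsh A η * walsh A ε = if η = ε then 2 ^ Fintype.card ι else 0 := by
  have hfactor (i : ι) : rademacher (η i) * rademacher (ε i) + 1 = if η i = ε i then 2 else 0 := by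
    cases η i <;> cases ε i <;> norm_num [rademacher]
  simp_rw [walsh, ← prod_mul_distrib, ← powerset_univ, ← prod_add_one, hfactor]
  split_ifs with h
  · simp [h]
  · obtain ⟨i, hi⟩ := Function.ne_iff.mp h
    exact prod_eq_zero (mem_univ i) (if_neg hi)

lemma sum_walshCoeff_mul_walsh (f : (ι → Bool) → ℝ) (ε : ι → Bool) :
    ∑ A : Finset ι, walshCoeff f A * walsh A ε = 2 ^ Fintype.card ι * f ε := by
  simp_rw [walshCoeff, sum_mul, mul_assoc]
  rw [sum_comm]
  simp_rw [← mul_sum, sum_walsh_mul_walsh]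
  simp [mul_comm]

lemma sum_walshCoeff_mul_walshCoeff (f g : (ι → Bool) → ℝ) :
    ∑ A : Finset ι, walshCoeff f A * walshCoeff g A = 2 ^ Fintype.card ι * ∑ ε, f ε * g ε := by
  conv_lhs => enter [2, A, 2]; rw [walshCoeff]
  simp_rw [mul_sum, mul_left_comm (walshCoeff f _)]
  rw [sum_comm]
  simp_rw [← mul_sum, sum_walshCoeff_mul_walsh, mul_sum]
  exact sum_congr rfl fun ε _ => by ring

lemma walshCoeff_comp_flipAt (f : (ι → Bool) → ℝ) (i : ι) (A : Finset ι) :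
    walshCoeff (f ∘ flipAt i) A = (if i ∈ A then -1 else 1) * walshCoeff f A := by
  rw [walshCoeff, ← Equiv.sum_comp (flipAt_involutive i).toPerm, walshCoeff, mul_sum]
  refine sum_congr rfl fun ε _ => ?_
  simp only [Function.Involutive.coe_toPerm, Function.comp_apply, flipAt_involutive i ε,
    walsh_flipAt]
  ring

lemma walshCoeff_eq_zero_of_odd {f : (ι → Bool) → ℝ} (hf : ∀ ε, f (fun j => !ε j) = f ε)
    {A : Finset ι} (hA : Odd A.card) : walshCoeff f A = 0 := by
  have hnot : Function.Involutive fun (ε : ι → Bool) j => !ε j := fun ε => by simp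
  have h := Equiv.sum_comp hnot.toPerm (fun ε => f ε * walsh A ε)
  simp only [Function.Involutive.coe_toPerm, hf, walsh_not, hA.neg_one_pow, neg_one_mul, mul_neg,
    sum_neg_distrib] at h
  rw [walshCoeff]
  linarith

lemma sum_walshCoeff_sq (f : (ι → Bool) → ℝ) :
    ∑ A : Finset ι, walshCoeff f A ^ 2 = 2 ^ Fintype.card ι * ∑ ε, f ε ^ 2 := by
  simpa only [sq] using sum_walshCoeff_mul_walshCoeff f f

lemma two_pow_card_mul_sum_mul_flipAt (f : (ι → Bool) → ℝ) (i : ι) :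
    2 ^ Fintype.card ι * ∑ ε, f ε * f (flipAt i ε) =
      ∑ A : Finset ι, (if i ∈ A then -1 else 1) * walshCoeff f A ^ 2 := by
  refine (sum_walshCoeff_mul_walshCoeff f (f ∘ flipAt i)).symm.trans ?_
  simp_rw [walshCoeff_comp_flipAt]
  exact sum_congr rfl fun A _ => by ring

lemma sum_ite_mem_neg_one_one (A : Finset ι) :
    ∑ i, (if i ∈ A then (-1 : ℝ) else 1) = Fintype.card ι - 2 * A.card := by
  have h (i : ι) : (if i ∈ A then (-1 : ℝ) else 1) = 1 - 2 * if i ∈ A then 1 else 0 := by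
    split_ifs <;> norm_num
  simp_rw [h, sum_sub_distrib, ← mul_sum, sum_boole]
  simp

lemma sum_card_mul_walshCoeff_sq_le {f : (ι → Bool) → ℝ} (hf0 : ∀ ε, 0 ≤ f ε)
    (hf : ∀ ε, (Fintype.card ι - 2) * f ε ≤ ∑ i, f (flipAt i ε)) :
    ∑ A : Finset ι, (A.card : ℝ) * walshCoeff f A ^ 2 ≤ ∑ A : Finset ι, walshCoeff f A ^ 2 := by
  set n : ℝ := (Fintype.card ι : ℝ)
  have hpaired : (n - 2) * ∑ ε, f ε ^ 2 ≤ ∑ i, ∑ ε, f ε * f (flipAt i ε) := by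
    rw [sum_comm, mul_sum]
    gcongr with ε
    calc (n - 2) * f ε ^ 2 = f ε * ((n - 2) * f ε) := by ring
      _ ≤ f ε * ∑ i, f (flipAt i ε) := mul_le_mul_of_nonneg_left (hf ε) (hf0 ε)
      _ = ∑ i, f ε * f (flipAt i ε) := mul_sum _ _ _
  have hspectral : 2 ^ Fintype.card ι * ∑ i, ∑ ε, f ε * f (flipAt i ε) =
      ∑ A : Finset ι, (n - 2 * A.card) * walshCoeff f A ^ 2 := by
    rw [mul_sum]
    simp_rw [two_pow_card_mul_sum_mul_flipAt]
    rw [sum_comm]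
    simp_rw [← sum_mul, sum_ite_mem_neg_one_one]
    rfl
  have hle : (n - 2) * ∑ A : Finset ι, walshCoeff f A ^ 2 ≤
      ∑ A : Finset ι, (n - 2 * A.card) * walshCoeff f A ^ 2 := by
    calc (n - 2) * ∑ A : Finset ι, walshCoeff f A ^ 2
        = 2 ^ Fintype.card ι * ((n - 2) * ∑ ε, f ε ^ 2) := by rw [sum_walshCoeff_sq]; ring
      _ ≤ 2 ^ Fintype.card ι * ∑ i, ∑ ε, f ε * f (flipAt i ε) := by gcongr
      _ = _ := hspectral
  simp only [sub_mul, sum_sub_distrib, mul_assoc, ← mul_sum] at hle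
  linarith

lemma sum_walshCoeff_sq_le_two_mul_sq {f : (ι → Bool) → ℝ} (hf0 : ∀ ε, 0 ≤ f ε)
    (hf : ∀ ε, (Fintype.card ι - 2) * f ε ≤ ∑ i, f (flipAt i ε))
    (heven : ∀ ε, f (fun j => !ε j) = f ε) :
    ∑ A : Finset ι, walshCoeff f A ^ 2 ≤ 2 * walshCoeff f ∅ ^ 2 := by
  have hterm (A : Finset ι) : walshCoeff f A ^ 2 - (if A = ∅ then 2 * walshCoeff f A ^ 2 else 0)
      ≤ (A.card - 1) * walshCoeff f A ^ 2 := by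
    obtain rfl | hA := eq_or_ne A ∅
    · simp only [if_true, card_empty, Nat.cast_zero]
      linarith
    rw [if_neg hA, sub_zero]
    obtain h1 | h2 := (Nat.one_le_iff_ne_zero.mpr (card_ne_zero.mpr
      (nonempty_iff_ne_empty.mpr hA))).eq_or_lt
    · rw [walshCoeff_eq_zero_of_odd heven (h1 ▸ odd_one)]
      simp
    · have : (2 : ℝ) ≤ A.card := by exact_mod_cast h2
      nlinarith [sq_nonneg (walshCoeff f A)]
  have hsum := sum_le_sum fun A (_ : A ∈ univ) => hterm A
  simp only [sum_sub_distrib, sum_ite_eq', mem_univ, if_true, sub_mul, one_mul] at hsum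
  linarith [sum_card_mul_walshCoeff_sq_le hf0 hf]

noncomputable def signedSum (b : ι → ℝ) (ε : ι → Bool) : ℝ := ∑ i, rademacher (ε i) * b i

omit [DecidableEq ι] in
lemma signedSum_not (b : ι → ℝ) (ε : ι → Bool) :
    signedSum b (fun j => !ε j) = -signedSum b ε := by
  simp [signedSum, ← sum_neg_distrib]

lemma signedSum_flipAt (b : ι → ℝ) (i : ι) (ε : ι → Bool) :
    signedSum b (flipAt i ε) = signedSum b ε - 2 * (rademacher (ε i) * b i) := by
  have hoff : ∀ j ∈ univ.erase i, rademacher (flipAt i ε j) * b j = rademacher (ε j) * b j :=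
    fun j hj => by rw [flipAt_apply_of_ne (ne_of_mem_erase hj)]
  rw [signedSum, signedSum, ← add_sum_erase _ _ (mem_univ i),
    ← add_sum_erase _ (fun j => rademacher (ε j) * b j) (mem_univ i), sum_congr rfl hoff,
    flipAt_apply_self, rademacher_not]
  ring

lemma sum_signedSum_flipAt (b : ι → ℝ) (ε : ι → Bool) :
    ∑ i, signedSum b (flipAt i ε) = (Fintype.card ι - 2) * signedSum b ε := by
  simp_rw [signedSum_flipAt, sum_sub_distrib, ← mul_sum, sum_const, card_univ, nsmul_eq_mul]
  rw [← signedSum]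
  ring

lemma sum_rademacher_mul_rademacher (i j : ι) :
    ∑ ε : ι → Bool, rademacher (ε i) * rademacher (ε j) =
      if i = j then 2 ^ Fintype.card ι else 0 := by
  split_ifs with hij
  · simp [hij, rademacher_mul_self]
  · have h := Equiv.sum_comp (flipAt_involutive i).toPerm
      (fun ε => rademacher (ε i) * rademacher (ε j))
    simp only [Function.Involutive.coe_toPerm, flipAt_apply_self, flipAt_apply_of_ne (Ne.symm hij),
      rademacher_not, neg_mul, sum_neg_distrib] at h
    linarith

lemma sum_signedSum_sq (b : ι → ℝ) :
    ∑ ε, signedSum b ε ^ 2 = 2 ^ Fintype.card ι * ∑ i, b i ^ 2 := by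
  calc ∑ ε, signedSum b ε ^ 2
      = ∑ i, ∑ j, b i * b j * ∑ ε : ι → Bool, rademacher (ε i) * rademacher (ε j) := by
        simp_rw [signedSum, sq, sum_mul_sum, mul_sum]
        rw [sum_comm]
        refine sum_congr rfl fun i _ => ?_
        rw [sum_comm]
        exact sum_congr rfl fun j _ => sum_congr rfl fun ε _ => by ring
    _ = 2 ^ Fintype.card ι * ∑ i, b i ^ 2 := by
        simp_rw [sum_rademacher_mul_rademacher, mul_ite, mul_zero, sum_ite_eq, mem_univ, if_true,
          mul_sum]
        exact sum_congr rfl fun i _ => by ring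

/-- Szarek's inequality: the constant `1 / √2` is optimal. -/
theorem khinchine_L1_signedSum (b : ι → ℝ) :
    2 ^ Fintype.card ι * √(∑ i, b i ^ 2) ≤ √2 * ∑ ε, |signedSum b ε| := by
  set f : (ι → Bool) → ℝ := fun ε => |signedSum b ε|
  have hf0 (ε : ι → Bool) : 0 ≤ f ε := abs_nonneg _
  have hflip (ε : ι → Bool) : (Fintype.card ι - 2) * f ε ≤ ∑ i, f (flipAt i ε) := by
    calc (Fintype.card ι - 2) * f ε ≤ |(Fintype.card ι - 2) * signedSum b ε| := by
          rw [abs_mul]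
          exact mul_le_mul_of_nonneg_right (le_abs_self _) (abs_nonneg _)
      _ = |∑ i, signedSum b (flipAt i ε)| := by rw [sum_signedSum_flipAt]
      _ ≤ ∑ i, f (flipAt i ε) := abs_sum_le_sum_abs _ _
  have heven (ε : ι → Bool) : f (fun j => !ε j) = f ε := by simp [f, signedSum_not]
  have hsq : (2 ^ Fintype.card ι) ^ 2 * ∑ i, b i ^ 2 ≤ 2 * (∑ ε, f ε) ^ 2 := by
    calc (2 ^ Fintype.card ι) ^ 2 * ∑ i, b i ^ 2 = ∑ A : Finset ι, walshCoeff f A ^ 2 := by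
          simp only [sum_walshCoeff_sq, f, sq_abs, sum_signedSum_sq]
          ring
      _ ≤ 2 * walshCoeff f ∅ ^ 2 := sum_walshCoeff_sq_le_two_mul_sq hf0 hflip heven
      _ = 2 * (∑ ε, f ε) ^ 2 := by rw [walshCoeff_empty]
  refine (pow_le_pow_iff_left₀ (by positivity) (by positivity) two_ne_zero).mp ?_
  rwa [mul_pow, mul_pow, Real.sq_sqrt (by positivity), Real.sq_sqrt zero_le_two]

noncomputable def multiSignedSum {m : ℕ} (a : (Fin m → ι) → ℝ) (ε : Fin m → ι → Bool) : ℝ :=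
  ∑ i, (∏ k, rademacher (ε k (i k))) * a i

omit [DecidableEq ι] in
lemma multiSignedSum_cons {m : ℕ} (a : (Fin (m + 1) → ι) → ℝ) (ε₀ : ι → Bool)
    (ε : Fin m → ι → Bool) :
    multiSignedSum a (Fin.cons ε₀ ε) =
      signedSum (fun i₀ => multiSignedSum (fun i => a (Fin.cons i₀ i)) ε) ε₀ := by
  simp [multiSignedSum, signedSum, sum_pi_fin_succ, Fin.prod_univ_succ, mul_sum, mul_assoc]

theorem khinchine_L1_multiSignedSum (m : ℕ) (a : (Fin m → ι) → ℝ) :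
    2 ^ (m * Fintype.card ι) * √(∑ i, a i ^ 2) ≤ √2 ^ m * ∑ ε, |multiSignedSum a ε| := by
  induction m with
  | zero => simp [multiSignedSum, Real.sqrt_sq_eq_abs]
  | succ m ih =>
    set n := Fintype.card ι
    let row (i₀ : ι) : (Fin m → ι) → ℝ := fun i => a (Fin.cons i₀ i)
    let c (ε : Fin m → ι → Bool) (i₀ : ι) : ℝ := multiSignedSum (row i₀) ε
    have hrows : ∑ i, a i ^ 2 = ∑ i₀, √(∑ i, row i₀ i ^ 2) ^ 2 := by
      rw [sum_pi_fin_succ]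
      exact sum_congr rfl fun i₀ _ => (Real.sq_sqrt (by positivity)).symm
    have hsplit : ∑ ε, |multiSignedSum a ε| = ∑ ε, ∑ ε₀, |signedSum (c ε) ε₀| := by
      rw [sum_pi_fin_succ, sum_comm]
      simp_rw [multiSignedSum_cons]
      rfl
    calc 2 ^ ((m + 1) * n) * √(∑ i, a i ^ 2)
        = 2 ^ n * √(∑ i₀, (2 ^ (m * n) * √(∑ i, row i₀ i ^ 2)) ^ 2) := by
          rw [sqrt_sum_mul_sq (by positivity), hrows]
          ring
      _ ≤ 2 ^ n * √(∑ i₀, (√2 ^ m * ∑ ε, |c ε i₀|) ^ 2) := by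
          gcongr 2 ^ n * √(∑ i₀, ?_ ^ 2) with i₀
          exact ih (row i₀)
      _ = √2 ^ m * (2 ^ n * √(∑ i₀, (∑ ε, |c ε i₀|) ^ 2)) := by
          rw [sqrt_sum_mul_sq (by positivity)]
          ring
      _ ≤ √2 ^ m * (2 ^ n * ∑ ε, √(∑ i₀, c ε i₀ ^ 2)) := by
          gcongr √2 ^ m * (2 ^ n * ?_)
          simpa only [sq_abs] using sqrt_sum_sq_sum_le fun ε i₀ => |c ε i₀|
      _ ≤ √2 ^ m * (√2 * ∑ ε, ∑ ε₀, |signedSum (c ε) ε₀|) := by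
          gcongr √2 ^ m * ?_
          rw [mul_sum, mul_sum]
          exact sum_le_sum fun ε _ => khinchine_L1_signedSum (c ε)
      _ = √2 ^ (m + 1) * ∑ ε, |multiSignedSum a ε| := by
          rw [hsplit]
          ring

end BooleanCube

open BooleanCube in
theorem multiple_khinchine_general (m N : ℕ)
    (a : (Fin m → Fin N) → ℝ) :
    (1 / Real.sqrt 2) ^ m * Real.sqrt (∑ i : Fin m → Fin N, |a i| ^ 2)
      ≤ ((2 : ℝ) ^ (m * N))⁻¹ *
        ∑ ε : Fin m → Fin N → Bool,
          |∑ i : Fin m → Fin N,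
            (∏ k : Fin m, if ε k (i k) then (1 : ℝ) else -1) * a i| := by
  have h := khinchine_L1_multiSignedSum m a
  simp only [Fintype.card_fin, multiSignedSum, rademacher] at h
  simp only [sq_abs]
  rw [one_div, inv_pow, ← div_eq_inv_mul, div_le_iff₀ (by positivity), inv_mul_eq_div,
    div_mul_eq_mul_div, le_div_iff₀ (by positivity)]
  linarith

/-- **Multiple Khinchine inequality for `p = 1` with the optimal constant `A₁ = 1/√2`.**
For positive integers `m, N` and a real array `(a_{i₁,...,i_m})`, the `ℓ₂`-norm of the
array is bounded by `(√2)^m` times the average, over all choices of `m` sign vectors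
`ε¹,...,ε^m ∈ {-1,1}^N`, of `|∑_{i₁,...,i_m} ε¹_{i₁}···ε^m_{i_m} a_{i₁,...,i_m}|`. -/
theorem multiple_khinchine (m N : ℕ) (hm : 0 < m) (hN : 0 < N)
    (a : (Fin m → Fin N) → ℝ) :
    (1 / Real.sqrt 2) ^ m * Real.sqrt (∑ i : Fin m → Fin N, |a i| ^ 2)
      ≤ ((2 : ℝ) ^ (m * N))⁻¹ *
        ∑ ε : Fin m → Fin N → Bool,
          |∑ i : Fin m → Fin N,
            (∏ k : Fin m, if ε k (i k) then (1 : ℝ) else -1) * a i| :=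
  multiple_khinchine_general m N a
end

section
/- Let m ≥ 2 be an integer, let α ∈ [1,2], and set β_m = 2α(m−1)/(αm − 2 + α), so that q = (α, β_m, ..., β_m) satisfies 1/α + (m−1)/β_m = (m+1)/2. Let C ≥ 0 be a constant such that for every positive integer N and every continuous m-linear form T : (ℝ^N)^m → ℝ (ℝ^N with the sup norm), ( Σ_{j₁=1}^{N} ( Σ_{j₂,...,j_m=1}^{N} |T(e_{j₁},...,e_{j_m})|^{β_m} )^{α/β_m} )^{1/α} ≤ C · ‖T‖. Then C ≥ 2^{(2m − αm − 4 + 3α)/(2α)}. -/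
/-!
For `n ≥ 1` consider on `ℝ^{2^n}` the `(n+1)`-linear form
`T(x⁰, …, xⁿ) = ∑_σ x⁰_σ ∏_k (x^k_{i₀} + σ_k x^k_{i₁})`, where `σ` runs over the `2^n` sign
patterns. Summing over `σ` factorises, and `|a + b| + |a - b| ≤ 2 max (|a|, |b|)` gives
`‖T‖ ≤ 2^n`. On basis vectors, `|T(e_{j₁}, e_{j₂}, …)|` is `1` when every `j_k ∈ {i₀, i₁}` and `0`
otherwise, so every inner sum equals `2^n` and the mixed `(α, β)` norm of the coefficients is
`2^{n/α + n/β}`. Hence `C ≥ 2^{n/α + n/β - n}`, which for `n = m - 1` and the given `β` is the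
claimed exponent.
-/

open Real Finset

lemma abs_add_add_abs_sub_le_two_mul {a b c : ℝ} (ha : |a| ≤ c) (hb : |b| ≤ c) :
    |a + b| + |a - b| ≤ 2 * c := by
  rw [abs_le] at ha hb
  rcases abs_cases (a + b) with ⟨h₁, -⟩ | ⟨h₁, -⟩ <;>
    rcases abs_cases (a - b) with ⟨h₂, -⟩ | ⟨h₂, -⟩ <;> linarith

lemma sum_abs_add_neg_one_pow_mul_le {a b c : ℝ} (ha : |a| ≤ c) (hb : |b| ≤ c) :
    ∑ t : Fin 2, |a + (-1) ^ (t : ℕ) * b| ≤ 2 * c := by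
  simpa [Fin.sum_univ_two, ← sub_eq_add_neg] using abs_add_add_abs_sub_le_two_mul ha hb

lemma abs_single_add_neg_one_pow_mul_single {ι : Type*} [DecidableEq ι] {i₀ i₁ : ι}
    (h : i₀ ≠ i₁) (i : ι) (t : ℕ) :
    |(Pi.single i 1 : ι → ℝ) i₀ + (-1) ^ t * (Pi.single i 1 : ι → ℝ) i₁| =
      if i = i₀ ∨ i = i₁ then 1 else 0 := by
  rcases eq_or_ne i i₀ with rfl | h₀
  · simp [h.symm]
  rcases eq_or_ne i i₁ with rfl | h₁
  · simp [h]
  · simp [h₀, h₁, h₀.symm, h₁.symm]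

section SignPatternForm

variable (n : ℕ) (i₀ i₁ : Fin (2 ^ n))

/-- `σ : Fin n → Fin 2` stands for the sign pattern `k ↦ (-1) ^ σ k` and, through
`finFunctionFinEquiv`, for a coordinate of the first variable. -/
noncomputable def signPatternForm :
    MultilinearMap ℝ (fun _ : Fin (n + 1) => Fin (2 ^ n) → ℝ) ℝ :=
  ∑ σ : Fin n → Fin 2, (MultilinearMap.mkPiAlgebra ℝ (Fin (n + 1)) ℝ).compLinearMap
    (Fin.cons (LinearMap.proj (finFunctionFinEquiv σ)) fun k =>
      LinearMap.proj i₀ + (-1 : ℝ) ^ (σ k : ℕ) • LinearMap.proj i₁)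

lemma signPatternForm_apply (x : Fin (n + 1) → Fin (2 ^ n) → ℝ) :
    signPatternForm n i₀ i₁ x = ∑ σ : Fin n → Fin 2, x 0 (finFunctionFinEquiv σ) *
      ∏ k, (x k.succ i₀ + (-1) ^ (σ k : ℕ) * x k.succ i₁) := by
  simp [signPatternForm, Fin.prod_univ_succ]

lemma norm_signPatternForm_apply_le (x : Fin (n + 1) → Fin (2 ^ n) → ℝ) :
    ‖signPatternForm n i₀ i₁ x‖ ≤ 2 ^ n * ∏ k, ‖x k‖ := by
  rw [signPatternForm_apply, Real.norm_eq_abs]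
  calc _ ≤ ∑ σ : Fin n → Fin 2, ‖x 0‖ *
        ∏ k : Fin n, |x k.succ i₀ + (-1) ^ (σ k : ℕ) * x k.succ i₁| := by
        refine (abs_sum_le_sum_abs _ _).trans (sum_le_sum fun σ _ => ?_)
        rw [abs_mul, abs_prod]
        gcongr
        exact norm_le_pi_norm (x 0) _
    _ = ‖x 0‖ * ∏ k : Fin n, ∑ t : Fin 2, |x k.succ i₀ + (-1) ^ (t : ℕ) * x k.succ i₁| := by
        rw [Fintype.prod_sum, mul_sum]
    _ ≤ ‖x 0‖ * ∏ k : Fin n, 2 * ‖x k.succ‖ := by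
        gcongr with k
        have hx (i : Fin (2 ^ n)) : |x k.succ i| ≤ ‖x k.succ‖ := norm_le_pi_norm (x k.succ) i
        exact sum_abs_add_neg_one_pow_mul_le (hx i₀) (hx i₁)
    _ = 2 ^ n * ∏ k, ‖x k‖ := by
        rw [prod_mul_distrib, prod_const, card_univ, Fintype.card_fin, Fin.prod_univ_succ]
        ring

variable {i₀ i₁}

lemma abs_signPatternForm_single (h : i₀ ≠ i₁) (j₁ : Fin (2 ^ n)) (j : Fin n → Fin (2 ^ n)) :
    |signPatternForm n i₀ i₁ (Fin.cons (Pi.single j₁ 1) fun k => Pi.single (j k) 1)| =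
      if j ∈ Fintype.piFinset fun _ => {i₀, i₁} then 1 else 0 := by
  rw [signPatternForm_apply, Fintype.sum_eq_single (finFunctionFinEquiv.symm j₁)]
  · simp only [Fin.cons_zero, Fin.cons_succ, Equiv.apply_symm_apply, Pi.single_eq_same, one_mul,
      abs_prod, abs_single_add_neg_one_pow_mul_single h, Fintype.prod_boole, Fintype.mem_piFinset,
      mem_insert, mem_singleton]
    congr
  · intro σ hσ
    rw [Fin.cons_zero, Pi.single_eq_of_ne (finFunctionFinEquiv.eq_symm_apply.not.mp hσ),
      zero_mul]

lemma sum_rpow_abs_signPatternForm_single (h : i₀ ≠ i₁) {β : ℝ} (hβ : β ≠ 0)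
    (j₁ : Fin (2 ^ n)) :
    ∑ j : Fin n → Fin (2 ^ n),
      |signPatternForm n i₀ i₁ (Fin.cons (Pi.single j₁ 1) fun k => Pi.single (j k) 1)| ^ β =
      2 ^ n := by
  simp only [abs_signPatternForm_single n h, apply_ite (· ^ β), one_rpow, zero_rpow hβ,
    sum_ite_mem, univ_inter, sum_const, Fintype.card_piFinset_const, card_pair h, nsmul_one]
  norm_cast

lemma mixed_sum_rpow_abs_signPatternForm_single (h : i₀ ≠ i₁) {α β : ℝ} (hα : α ≠ 0)
    (hβ : β ≠ 0) :
    (∑ j₁ : Fin (2 ^ n), (∑ j : Fin n → Fin (2 ^ n),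
      |signPatternForm n i₀ i₁ (Fin.cons (Pi.single j₁ 1) fun k => Pi.single (j k) 1)| ^ β)
        ^ (α / β)) ^ (1 / α) = 2 ^ ((n : ℝ) / α + n / β) := by
  simp only [sum_rpow_abs_signPatternForm_single n h hβ, sum_const, card_univ, Fintype.card_fin,
    nsmul_eq_mul, Nat.cast_pow, Nat.cast_ofNat, ← rpow_natCast, ← rpow_mul zero_le_two,
    ← rpow_add two_pos]
  congr 1
  field_simp

end SignPatternForm

theorem generalized_BH_lower_bound_general (m : ℕ) (α β : ℝ)
    (hα1 : 1 ≤ α)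
    (hβ : β = 2 * α * ((m : ℝ) + 2 - 1) / (α * ((m : ℝ) + 2) - 2 + α))
    (C : ℝ) (hC : 0 ≤ C)
    (h : ∀ N : ℕ, 0 < N →
      ∀ T : ContinuousMultilinearMap ℝ (fun _ : Fin (m + 2) => (Fin N → ℝ)) ℝ,
        (∑ j₁ : Fin N, (∑ j : Fin (m + 1) → Fin N,
            |T (Fin.cons (Pi.single j₁ 1) (fun i => Pi.single (j i) 1))| ^ β)
          ^ (α / β)) ^ (1 / α) ≤ C * ‖T‖) :
    (2 : ℝ) ^ ((2 * ((m : ℝ) + 2) - α * ((m : ℝ) + 2) - 4 + 3 * α) / (2 * α)) ≤ C := by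
  have hα : 0 < α := by linarith
  have hnum : 0 < (m : ℝ) + 2 - 1 := by linarith [m.cast_nonneg (α := ℝ)]
  have hden : 0 < α * ((m : ℝ) + 2) - 2 + α := by nlinarith
  have hβ₀ : 0 < β := hβ ▸ by positivity
  obtain ⟨i₀, i₁, hi⟩ :=
    (Fin.nontrivial_iff_two_le.mpr (Nat.le_self_pow m.succ_ne_zero 2)).exists_pair_ne
  set T := (signPatternForm (m + 1) i₀ i₁).mkContinuous _
    (norm_signPatternForm_apply_le (m + 1) i₀ i₁)
  have hT : ‖T‖ ≤ 2 ^ (m + 1) := MultilinearMap.mkContinuous_norm_le _ (by positivity) _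
  have key := (h _ (by positivity) T).trans (mul_le_mul_of_nonneg_left hT hC)
  rw [MultilinearMap.coe_mkContinuous,
    mixed_sum_rpow_abs_signPatternForm_single (m + 1) hi hα.ne' hβ₀.ne'] at key
  have hexp : (2 * ((m : ℝ) + 2) - α * ((m : ℝ) + 2) - 4 + 3 * α) / (2 * α) =
      ((m + 1 : ℕ) : ℝ) / α + (m + 1 : ℕ) / β - (m + 1 : ℕ) := by
    rw [hβ]
    push_cast
    field_simp
    ring
  rw [hexp, rpow_sub two_pos, div_le_iff₀ (by positivity), rpow_natCast]
  exact key

/-- **Lower bound for the constants of the generalized Bohnenblust–Hille inequality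
with multiple exponent `(α, β_m, ..., β_m)`.** Let `m ≥ 2` (written as `m + 2`),
`α ∈ [1,2]`, and `β = 2α(m−1)/(αm − 2 + α)`. If `C ≥ 0` is such that for every positive
integer `N` and every continuous `m`-linear form `T` on `(ℝ^N)^m` (sup norm),
`(∑_{j₁} (∑_{j₂,...,j_m} |T(e_{j₁},...,e_{j_m})|^β)^{α/β})^{1/α} ≤ C‖T‖`, then
`C ≥ 2^{(2m − αm − 4 + 3α)/(2α)}`. -/
theorem generalized_BH_lower_bound (m : ℕ) (α β : ℝ)
    (hα1 : 1 ≤ α) (hα2 : α ≤ 2)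
    (hβ : β = 2 * α * ((m : ℝ) + 2 - 1) / (α * ((m : ℝ) + 2) - 2 + α))
    (C : ℝ) (hC : 0 ≤ C)
    (h : ∀ N : ℕ, 0 < N →
      ∀ T : ContinuousMultilinearMap ℝ (fun _ : Fin (m + 2) => (Fin N → ℝ)) ℝ,
        (∑ j₁ : Fin N, (∑ j : Fin (m + 1) → Fin N,
            |T (Fin.cons (Pi.single j₁ 1) (fun i => Pi.single (j i) 1))| ^ β)
          ^ (α / β)) ^ (1 / α) ≤ C * ‖T‖) :
    (2 : ℝ) ^ ((2 * ((m : ℝ) + 2) - α * ((m : ℝ) + 2) - 4 + 3 * α) / (2 * α)) ≤ C :=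
  generalized_BH_lower_bound_general m α β hα1 hβ C hC h
end

section
/- Let m ≥ 2 be an integer and β = (2m−2)/m. Suppose C ≥ 0 is a constant such that for every positive integer N and every continuous m-linear form T : (ℝ^N)^m → ℝ (ℝ^N with the sup norm), ( Σ_{j₁=1}^{N} ( ··· ( Σ_{j_{m-1}=1}^{N} ( Σ_{j_m=1}^{N} |T(e_{j₁},...,e_{j_m})|² )^{β/2} ) ··· )^{β/β} )^{1/β} ≤ C‖T‖, i.e. C is valid for the multiple exponent (β,...,β,2). Then C is also valid for the multiple exponent (2,β,...,β), i.e. ( Σ_{j₁=1}^{N} ( Σ_{j₂,...,j_m=1}^{N} |T(e_{j₁},...,e_{j_m})|^{β} )^{2/β} )^{1/2} ≤ C‖T‖ for all N and all such T. -/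
/-!
Rotating the arguments of `T` cyclically turns the hypothesis for `(β,…,β,2)` into a bound on the
array whose first index carries the innermost `ℓ₂`-sum. Since `β ≤ 2`, Minkowski's inequality
`‖‖·‖_{ℓ_β}‖_{ℓ₂} ≤ ‖‖·‖_{ℓ₂}‖_{ℓ_β}`, applied level by level, pushes the outer `ℓ₂`-norm of the
`(2,β,…,β)`-norm all the way inside, where it meets that bound.
-/

open Real

/-- The mixed `ℓ_{q₁}(ℓ_{q₂}(···ℓ_{q_m}))`-norm of an array `f` indexed by
`(Fin m → Fin N)`:
`(∑_{j₁} (∑_{j₂} (··· (∑_{j_m} |f(j₁,...,j_m)|^{q_m})^{q_{m-1}/q_m} ···)^{q₂/q₃})^{q₁/q₂})^{1/q₁}`. -/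
noncomputable def mixedNorm {N : ℕ} : (m : ℕ) → (Fin m → ℝ) → ((Fin m → Fin N) → ℝ) → ℝ
  | 0, _, f => |f (fun i => i.elim0)|
  | m + 1, q, f =>
      (∑ j : Fin N,
        (mixedNorm m (fun i => q i.succ) (fun r => f (Fin.cons j r))) ^ (q 0))
        ^ (1 / q 0)

section IteratedLp

variable {ι κ : Type*}

theorem Lp_finset_sum_le_of_nonneg (s : Finset κ) (t : Finset ι) (F : κ → ι → ℝ)
    (hF : ∀ k j, 0 ≤ F k j) {p : ℝ} (hp : 1 ≤ p) :
    (∑ j ∈ t, (∑ k ∈ s, F k j) ^ p) ^ (1 / p) ≤ ∑ k ∈ s, (∑ j ∈ t, F k j ^ p) ^ (1 / p) := by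
  classical
  induction s using Finset.cons_induction with
  | empty =>
    simp [zero_rpow (by positivity : p ≠ 0), zero_rpow (by positivity : p⁻¹ ≠ 0)]
  | cons a s ha ih =>
    simp only [Finset.sum_cons]
    exact (Lp_add_le_of_nonneg t hp (fun j _ => hF a j)
      (fun j _ => Finset.sum_nonneg fun k _ => hF k j)).trans (add_le_add le_rfl ih)

theorem Lq_Lp_le_Lp_Lq [Fintype ι] [Fintype κ] {p q : ℝ} (hp : 0 < p) (hpq : p ≤ q)
    (u : ι → κ → ℝ) (hu : ∀ j k, 0 ≤ u j k) :
    (∑ j, ((∑ k, u j k ^ p) ^ (1 / p)) ^ q) ^ (1 / q)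
      ≤ (∑ k, ((∑ j, u j k ^ q) ^ (1 / q)) ^ p) ^ (1 / p) := by
  have hA₀ : ∀ j, 0 ≤ ∑ k, u j k ^ p := fun j => Finset.sum_nonneg fun k _ => rpow_nonneg (hu j k) p
  have hB₀ : ∀ k, 0 ≤ ∑ j, u j k ^ q := fun k => Finset.sum_nonneg fun j _ => rpow_nonneg (hu j k) q
  have hA : ∀ j, ((∑ k, u j k ^ p) ^ (1 / p)) ^ q = (∑ k, u j k ^ p) ^ (q / p) := fun j => by
    rw [← rpow_mul (hA₀ j), one_div_mul_eq_div]
  have hB : ∀ k, ((∑ j, u j k ^ q) ^ (1 / q)) ^ p = (∑ j, u j k ^ q) ^ (1 / (q / p)) := fun k => by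
    rw [← rpow_mul (hB₀ k), one_div_div, one_div_mul_eq_div]
  have hu' : ∀ j k, (u j k ^ p) ^ (q / p) = u j k ^ q := fun j k => by
    rw [← rpow_mul (hu j k), mul_div_cancel₀ q hp.ne']
  calc (∑ j, ((∑ k, u j k ^ p) ^ (1 / p)) ^ q) ^ (1 / q)
      = ((∑ j, (∑ k, u j k ^ p) ^ (q / p)) ^ (1 / (q / p))) ^ (1 / p) := by
        simp_rw [hA]
        rw [← rpow_mul (Finset.sum_nonneg fun j _ => rpow_nonneg (hA₀ j) _)]
        field_simp
    _ ≤ (∑ k, (∑ j, (u j k ^ p) ^ (q / p)) ^ (1 / (q / p))) ^ (1 / p) := by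
        refine rpow_le_rpow (rpow_nonneg (Finset.sum_nonneg fun j _ => rpow_nonneg (hA₀ j) _) _)
          ?_ (by positivity)
        exact Lp_finset_sum_le_of_nonneg _ _ (fun k j => u j k ^ p)
          (fun k j => rpow_nonneg (hu j k) p) ((one_le_div hp).2 hpq)
    _ = (∑ k, ((∑ j, u j k ^ q) ^ (1 / q)) ^ p) ^ (1 / p) := by
        simp_rw [hu', hB]

end IteratedLp

namespace mixedNorm

variable {N : ℕ}

theorem nonneg : ∀ {n : ℕ} (r : Fin n → ℝ) (f : (Fin n → Fin N) → ℝ), 0 ≤ mixedNorm n r f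
  | 0, _, _ => abs_nonneg _
  | _ + 1, _, _ => rpow_nonneg (Finset.sum_nonneg fun _ _ => rpow_nonneg (nonneg _ _) _) _

theorem cons {n : ℕ} (p : ℝ) (r : Fin n → ℝ) (f : (Fin (n + 1) → Fin N) → ℝ) :
    mixedNorm (n + 1) (Fin.cons p r) f
      = (∑ j, mixedNorm n r (fun s => f (Fin.cons j s)) ^ p) ^ (1 / p) :=
  rfl

theorem snoc {q : ℝ} : ∀ {n : ℕ} (r : Fin n → ℝ) (f : (Fin (n + 1) → Fin N) → ℝ),
    mixedNorm (n + 1) (Fin.snoc r q) f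
      = mixedNorm n r (fun s => (∑ k, |f (Fin.snoc s k)| ^ q) ^ (1 / q))
  | 0, r, f => by
    simp only [mixedNorm, Fin.snoc_zero]
    rw [abs_of_nonneg (by positivity)]
    congr! with j _ i
    rw [Fin.fin_one_eq_zero i]
    rfl
  | n + 1, r, f => by
    rw [← Fin.cons_self_tail r, ← Fin.cons_snoc_eq_snoc_cons, cons, cons]
    simp_rw [snoc (Fin.tail r), Fin.cons_snoc_eq_snoc_cons]

theorem Lq_le_snoc {q : ℝ} : ∀ {n : ℕ} {r : Fin n → ℝ}, (∀ i, 0 < r i) → (∀ i, r i ≤ q) →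
    ∀ g : Fin N → (Fin n → Fin N) → ℝ,
    (∑ j, mixedNorm n r (g j) ^ q) ^ (1 / q)
      ≤ mixedNorm n r (fun s => (∑ j, |g j s| ^ q) ^ (1 / q))
  | 0, r, _, _, g => by
    simp only [mixedNorm]
    rw [abs_of_nonneg (by positivity)]
  | n + 1, r, hr, hrq, g => by
    rw [← Fin.cons_self_tail r]
    simp only [cons]
    calc _ ≤ (∑ k, ((∑ j, mixedNorm n (Fin.tail r) (fun s => g j (Fin.cons k s)) ^ q) ^ (1 / q))
            ^ r 0) ^ (1 / r 0) :=
          Lq_Lp_le_Lp_Lq (hr 0) (hrq 0) _ fun _ _ => nonneg _ _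
      _ ≤ _ := by
          have hpos : ∀ k, 0 ≤ (∑ j, mixedNorm n (Fin.tail r) (fun s => g j (Fin.cons k s)) ^ q)
              ^ (1 / q) := fun k =>
            rpow_nonneg (Finset.sum_nonneg fun j _ => rpow_nonneg (nonneg _ _) _) _
          have hr₀ := (hr 0).le
          refine rpow_le_rpow (Finset.sum_nonneg fun k _ => rpow_nonneg (hpos k) _)
            (Finset.sum_le_sum fun k _ => rpow_le_rpow (hpos k) ?_ hr₀) (one_div_nonneg.2 hr₀)
          exact Lq_le_snoc (fun i => hr i.succ) (fun i => hrq i.succ) fun j s => g j (Fin.cons k s)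

end mixedNorm

theorem ContinuousMultilinearMap.domDomCongr_finRotate_symm_apply_snoc {R ι E F : Type*}
    [Semiring R] [AddCommMonoid E] [Module R E] [TopologicalSpace E] [AddCommMonoid F] [Module R F]
    [TopologicalSpace F] {n : ℕ} (T : ContinuousMultilinearMap R (fun _ : Fin (n + 1) => E) F)
    (x : ι → E) (s : Fin n → ι) (k : ι) :
    T.domDomCongr (finRotate (n + 1)).symm (fun i => x ((Fin.snoc s k : Fin (n + 1) → ι) i))
      = T (fun i => x ((Fin.cons k s : Fin (n + 1) → ι) i)) := by
  simp [Fin.snoc_eq_cons_rotate]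

theorem exponent_two_moves_to_front_general (m : ℕ) (β : ℝ)
    (hβ : β = (2 * ((m : ℝ) + 2) - 2) / ((m : ℝ) + 2))
    (C : ℝ)
    (h : ∀ N : ℕ, 0 < N →
      ∀ T : ContinuousMultilinearMap ℝ (fun _ : Fin (m + 2) => (Fin N → ℝ)) ℝ,
        mixedNorm (m + 2) (fun i => if (i : ℕ) = m + 1 then 2 else β)
            (fun j => T (fun i => Pi.single (j i) 1))
          ≤ C * ‖T‖) :
    ∀ N : ℕ, 0 < N →
      ∀ T : ContinuousMultilinearMap ℝ (fun _ : Fin (m + 2) => (Fin N → ℝ)) ℝ,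
        mixedNorm (m + 2) (fun i => if (i : ℕ) = 0 then 2 else β)
            (fun j => T (fun i => Pi.single (j i) 1))
          ≤ C * ‖T‖ := by
  have hm : (0 : ℝ) < m + 2 := by positivity
  have hβ₀ : 0 < β := by rw [hβ]; exact div_pos (by linarith) hm
  have hβ₂ : β ≤ 2 := by rw [hβ, div_le_iff₀ hm]; linarith
  have hfront : (fun i : Fin (m + 2) => if (i : ℕ) = 0 then (2 : ℝ) else β)
      = Fin.cons 2 fun _ => β := by
    funext i; cases i using Fin.cases <;> simp
  have hback : (fun i : Fin (m + 2) => if (i : ℕ) = m + 1 then (2 : ℝ) else β)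
      = Fin.snoc (fun _ => β) 2 := by
    funext i
    cases i using Fin.lastCases with
    | last => simp
    | cast i => simp [i.isLt.ne]
  intro N hN T
  calc _ = (∑ j, mixedNorm (m + 1) (fun _ => β)
          (fun s => T (fun i => Pi.single (Fin.cons j s i) 1)) ^ (2 : ℝ)) ^ (1 / (2 : ℝ)) := by
        rw [hfront, mixedNorm.cons]
    _ ≤ mixedNorm (m + 1) (fun _ => β)
          (fun s => (∑ j, |T (fun i => Pi.single (Fin.cons j s i) 1)| ^ (2 : ℝ)) ^ (1 / (2 : ℝ))) :=
        mixedNorm.Lq_le_snoc (fun _ => hβ₀) (fun _ => hβ₂) _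
    _ = mixedNorm (m + 2) (fun i => if (i : ℕ) = m + 1 then 2 else β)
          (fun j => T.domDomCongr (finRotate (m + 2)).symm (fun i => Pi.single (j i) 1)) := by
        rw [hback, mixedNorm.snoc]
        simp_rw [T.domDomCongr_finRotate_symm_apply_snoc fun a => Pi.single a (1 : ℝ)]
    _ ≤ C * ‖T‖ := by
        simpa using h N hN (T.domDomCongr (finRotate (m + 2)).symm)

/-- **Moving the exponent 2 from the last to the first position.** Let `m ≥ 2`
(written as `m + 2`) and `β = (2m−2)/m`. If `C ≥ 0` is a valid constant for the
multiple exponent `(β,...,β,2)`, i.e. for every positive integer `N` and every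
continuous `m`-linear form `T` on `(ℝ^N)^m` (sup norm) the mixed
`ℓ_β(···ℓ_β(ℓ_2))`-norm of the coefficient array of `T` is at most `C‖T‖`, then `C`
is also valid for the multiple exponent `(2,β,...,β)`. -/
theorem exponent_two_moves_to_front (m : ℕ) (β : ℝ)
    (hβ : β = (2 * ((m : ℝ) + 2) - 2) / ((m : ℝ) + 2))
    (C : ℝ) (hC : 0 ≤ C)
    (h : ∀ N : ℕ, 0 < N →
      ∀ T : ContinuousMultilinearMap ℝ (fun _ : Fin (m + 2) => (Fin N → ℝ)) ℝ,
        mixedNorm (m + 2) (fun i => if (i : ℕ) = m + 1 then 2 else β)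
            (fun j => T (fun i => Pi.single (j i) 1))
          ≤ C * ‖T‖) :
    ∀ N : ℕ, 0 < N →
      ∀ T : ContinuousMultilinearMap ℝ (fun _ : Fin (m + 2) => (Fin N → ℝ)) ℝ,
        mixedNorm (m + 2) (fun i => if (i : ℕ) = 0 then 2 else β)
            (fun j => T (fun i => Pi.single (j i) 1))
          ≤ C * ‖T‖ :=
  exponent_two_moves_to_front_general m β hβ C h
end
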